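/- arXiv:math/0408433 — 10 statements merged into one kernel-verified Lean document; each statement's English description precedes it below -/
import Mathlib

section
/- Every Mauldin–Williams graph has a unique invariant list: there exists exactly one family (K_v)_{v∈V} of nonempty compact sets K_v ⊆ T_v such that K_v = ⋃_{e∈E, s(e)=v} φ_e(K_{r(e)}) holds for every vertex v ∈ V. -/
/-- A finite directed graph with surjective range and source maps
(no sources and no sinks). -/
structure DirGraph (V E : Type*) where
  r : E → V
  s : E → V
  r_surj : Function.Surjective r
  s_surj : Function.Surjective s

/-- A Mauldin–Williams graph over the directed graph `G`.  The compact metric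
spaces `T v` are realized as pairwise disjoint nonempty compact subsets of an
ambient metric space `X` (modelling their disjoint union), and for each edge
`e` the map `φ e : T (r e) → T (s e)` satisfies
`c₁ * dist x y ≤ dist (φ e x) (φ e y) ≤ c * dist x y` with `0 < c₁ ≤ c < 1`. -/
structure MWGraph {V E : Type*} (G : DirGraph V E) (X : Type*) [MetricSpace X] where
  T : V → Set X
  φ : E → X → X
  c₁ : ℝ
  c : ℝ
  c₁_pos : 0 < c₁
  c₁_le_c : c₁ ≤ c
  c_lt_one : c < 1
  T_compact : ∀ v, IsCompact (T v)
  T_nonempty : ∀ v, (T v).Nonempty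
  T_disjoint : ∀ v w, v ≠ w → Disjoint (T v) (T w)
  maps_to : ∀ e, Set.MapsTo (φ e) (T (G.r e)) (T (G.s e))
  lower : ∀ e, ∀ x ∈ T (G.r e), ∀ y ∈ T (G.r e), c₁ * dist x y ≤ dist (φ e x) (φ e y)
  upper : ∀ e, ∀ x ∈ T (G.r e), ∀ y ∈ T (G.r e), dist (φ e x) (φ e y) ≤ c * dist x y

namespace MWGraph

variable {V E : Type*} {G : DirGraph V E} {X : Type*} [MetricSpace X]

/-- `K : V → Set X` is an invariant list for the Mauldin–Williams graph `M`:
a family of nonempty compact sets `K v ⊆ T v` with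
`K v = ⋃_{e ∈ E, s e = v} φ e '' K (r e)` for every vertex `v`. -/
def IsInvariantList (M : MWGraph G X) (K : V → Set X) : Prop :=
  (∀ v, K v ⊆ M.T v) ∧ (∀ v, IsCompact (K v)) ∧ (∀ v, (K v).Nonempty) ∧
    (∀ v, K v = ⋃ e ∈ {e : E | G.s e = v}, M.φ e '' K (G.r e))

/-- The Mauldin–Williams graph coincides with its own invariant list,
i.e. `(T v)_{v ∈ V}` is itself the invariant list. -/
def SelfInvariant (M : MWGraph G X) : Prop :=
  ∀ v, M.T v = ⋃ e ∈ {e : E | G.s e = v}, M.φ e '' M.T (G.r e)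

/-- The invariant set: the (disjoint) union of the sets of the family. -/
def KK (M : MWGraph G X) : Set X := ⋃ v, M.T v

/-- A Mauldin–Williams graph is totally disconnected if
`φ e '' K (r e)` and `φ g '' K (r g)` are disjoint whenever `e ≠ g`, `s e = s g`. -/
def TotallyDisconnected (M : MWGraph G X) : Prop :=
  ∀ e g : E, e ≠ g → G.s e = G.s g →
    Disjoint (M.φ e '' M.T (G.r e)) (M.φ g '' M.T (G.r g))

end MWGraph

/-!
The Hutchinson operator `F K v = ⋃_{s e = v} φ e '' K (r e)` is monotone and, for the largest
Hausdorff distance over the finitely many vertices, a contraction with ratio `c < 1`; so two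
invariant lists, both fixed points of `F`, are at distance `0`, i.e. equal. The decreasing limit
`⋂ₙ Fⁿ T` is a fixed point: its terms are nonempty and compact, and since the `φ e` are injective
and there are finitely many edges, `F` commutes with decreasing intersections.
-/

open Set Metric ENNReal NNReal

theorem ENNReal.eq_zero_of_le_mul_of_lt_one {a c : ℝ≥0∞} (hc : c < 1) (ha : a ≠ ∞)
    (h : a ≤ c * a) : a = 0 := by
  by_contra ha₀
  have hlt : a * c < a * 1 := ENNReal.mul_lt_mul_right ha₀ ha hc
  rw [mul_one, mul_comm] at hlt
  exact hlt.not_ge h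

section HausdorffDistance

variable {α β : Type*} [PseudoEMetricSpace α] [PseudoEMetricSpace β]

theorem LipschitzOnWith.infEDist_image_le {f : α → β} {K : ℝ≥0} {u t : Set α} {x : α}
    (hf : LipschitzOnWith K f u) (hK : K ≠ 0) (hx : x ∈ u) (ht : t ⊆ u) :
    infEDist (f x) (f '' t) ≤ K * infEDist x t := by
  have hK₀ : (K : ℝ≥0∞) ≠ 0 := by simpa using hK
  change _ ≤ K * ⨅ y ∈ t, edist x y
  simp only [mul_iInf_of_ne hK₀ coe_ne_top]
  exact le_iInf₂ fun y hy =>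
    (infEDist_le_edist_of_mem (mem_image_of_mem f hy)).trans (hf hx (ht hy))

theorem LipschitzOnWith.hausdorffEDist_image_le {f : α → β} {K : ℝ≥0} {u s t : Set α}
    (hf : LipschitzOnWith K f u) (hK : K ≠ 0) (hs : s ⊆ u) (ht : t ⊆ u) :
    hausdorffEDist (f '' s) (f '' t) ≤ K * hausdorffEDist s t := by
  refine hausdorffEDist_le_of_infEDist (forall_mem_image.2 fun x hx => ?_)
    (forall_mem_image.2 fun y hy => ?_)
  · grw [hf.infEDist_image_le hK (hs hx) ht, infEDist_le_hausdorffEDist_of_mem hx]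
  · grw [hf.infEDist_image_le hK (ht hy) hs, infEDist_le_hausdorffEDist_of_mem hy,
      hausdorffEDist_comm]

theorem Metric.eq_of_hausdorffEDist_le_mul_iSup {ι : Type*} [Finite ι] {K L : ι → Set α}
    (hK : ∀ i, IsClosed (K i)) (hL : ∀ i, IsClosed (L i))
    (hfin : ∀ i, hausdorffEDist (K i) (L i) ≠ ∞) {c : ℝ≥0∞} (hc : c < 1)
    (h : ∀ i, hausdorffEDist (K i) (L i) ≤ c * ⨆ j, hausdorffEDist (K j) (L j)) : K = L := by
  have hD : ⨆ j, hausdorffEDist (K j) (L j) = 0 :=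
    ENNReal.eq_zero_of_le_mul_of_lt_one hc (iSup_ne_top hfin) (iSup_le h)
  funext i
  refine ((hK i).hausdorffEDist_zero_iff (hL i)).1 (nonpos_iff_eq_zero.1 ?_)
  exact hD ▸ le_iSup (fun j => hausdorffEDist (K j) (L j)) i

end HausdorffDistance

namespace MWGraph

variable {V E : Type*} {G : DirGraph V E} {X : Type*} [MetricSpace X] (M : MWGraph G X)

theorem c_pos : 0 < M.c := M.c₁_pos.trans_le M.c₁_le_c

theorem injOn_phi (e : E) : InjOn (M.φ e) (M.T (G.r e)) := by
  intro x hx y hy hxy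
  have h := M.lower e x hx y hy
  rw [hxy, dist_self] at h
  exact dist_le_zero.1 (nonpos_of_mul_nonpos_right h M.c₁_pos)

theorem lipschitzOnWith_phi (e : E) :
    LipschitzOnWith (Real.toNNReal M.c) (M.φ e) (M.T (G.r e)) :=
  LipschitzOnWith.of_dist_le' (M.upper e)

def hutchinson (K : V → Set X) : V → Set X :=
  fun v => ⋃ e ∈ {e : E | G.s e = v}, M.φ e '' K (G.r e)

theorem hutchinson_mono : Monotone M.hutchinson :=
  fun _ _ h _ => iUnion₂_mono fun _ _ => image_mono (h _)

theorem hutchinson_T_le : M.hutchinson M.T ≤ M.T := fun _ =>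
  iUnion₂_subset fun e (he : G.s e = _) => he ▸ (M.maps_to e).image_subset

theorem isCompact_hutchinson [Finite E] {K : V → Set X} (hKT : K ≤ M.T)
    (hK : ∀ v, IsCompact (K v)) (v : V) : IsCompact (M.hutchinson K v) :=
  (toFinite _).isCompact_biUnion fun e _ =>
    (hK _).image_of_continuousOn ((M.lipschitzOnWith_phi e).continuousOn.mono (hKT _))

theorem nonempty_hutchinson {K : V → Set X} (hK : ∀ v, (K v).Nonempty) (v : V) :
    (M.hutchinson K v).Nonempty := by
  obtain ⟨e, rfl⟩ := G.s_surj v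
  obtain ⟨x, hx⟩ := hK (G.r e)
  exact ⟨M.φ e x, mem_biUnion rfl (mem_image_of_mem _ hx)⟩

theorem hutchinson_iInter [Finite E] {A : ℕ → V → Set X} (hA : Antitone A)
    (hAT : ∀ n, A n ≤ M.T) :
    M.hutchinson (fun v => ⋂ n, A n v) = fun v => ⋂ n, M.hutchinson (A n) v := by
  funext v
  simp only [hutchinson, biUnion_eq_iUnion]
  rw [iInter_iUnion_of_antitone (s := fun (e : {e | G.s e = v}) n => M.φ e '' A n (G.r e))
    fun e _ _ hmn => image_mono (hA hmn _)]
  refine iUnion_congr fun e => (InjOn.image_iInter_eq ?_)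
  exact (M.injOn_phi e).mono (iUnion_subset fun n => hAT n _)

theorem hausdorffEDist_hutchinson_le {K L : V → Set X} (hK : K ≤ M.T) (hL : L ≤ M.T) (v : V) :
    hausdorffEDist (M.hutchinson K v) (M.hutchinson L v) ≤
      ENNReal.ofReal M.c * ⨆ w, hausdorffEDist (K w) (L w) := by
  refine hausdorffEDist_iUnion_le.trans (iSup_le fun e => hausdorffEDist_iUnion_le.trans
    (iSup_le fun _ => ?_))
  have hc : Real.toNNReal M.c ≠ 0 := by simpa using M.c_pos
  grw [(M.lipschitzOnWith_phi e).hausdorffEDist_image_le hc (hK _) (hL _),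
    ← le_iSup (fun w => hausdorffEDist (K w) (L w)) (G.r e), ENNReal.ofReal]

variable {M}

theorem IsInvariantList.hutchinson_eq {K : V → Set X} (hK : M.IsInvariantList K) :
    M.hutchinson K = K :=
  funext fun v => (hK.2.2.2 v).symm

theorem IsInvariantList.unique [Finite V] {K L : V → Set X} (hK : M.IsInvariantList K)
    (hL : M.IsInvariantList L) : K = L := by
  refine eq_of_hausdorffEDist_le_mul_iSup (fun v => (hK.2.1 v).isClosed)
    (fun v => (hL.2.1 v).isClosed) (fun v => hausdorffEDist_ne_top_of_nonempty_of_bounded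
      (hK.2.2.1 v) (hL.2.2.1 v) (hK.2.1 v).isBounded (hL.2.1 v).isBounded)
    (ENNReal.ofReal_lt_one.2 M.c_lt_one) fun v => ?_
  have h := M.hausdorffEDist_hutchinson_le hK.1 hL.1 v
  rwa [hK.hutchinson_eq, hL.hutchinson_eq] at h

variable (M)

theorem exists_isInvariantList [Finite E] : ∃ K, M.IsInvariantList K := by
  set A : ℕ → V → Set X := fun n => M.hutchinson^[n] M.T
  have hA : Antitone A := M.hutchinson_mono.antitone_iterate_of_map_le M.hutchinson_T_le
  have hAT : ∀ n, A n ≤ M.T := fun n => hA n.zero_le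
  have hA_succ : ∀ n, A (n + 1) = M.hutchinson (A n) := fun n =>
    Function.iterate_succ_apply' _ _ _
  have hcompact : ∀ n v, IsCompact (A n v) := by
    intro n
    induction n with
    | zero => exact M.T_compact
    | succ n ih => rw [hA_succ]; exact M.isCompact_hutchinson (hAT n) ih
  have hnonempty : ∀ n v, (A n v).Nonempty := by
    intro n
    induction n with
    | zero => exact M.T_nonempty
    | succ n ih => rw [hA_succ]; exact M.nonempty_hutchinson ih
  refine ⟨fun v => ⋂ n, A n v, fun v => iInter_subset _ 0, fun v => ?_, fun v => ?_, fun v => ?_⟩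
  · exact (hcompact 0 v).of_isClosed_subset (isClosed_iInter fun n => (hcompact n v).isClosed)
      (iInter_subset _ 0)
  · exact IsCompact.nonempty_iInter_of_sequence_nonempty_isCompact_isClosed _
      (fun n => hA n.le_succ v) (hnonempty · v) (hcompact 0 v) (fun n => (hcompact n v).isClosed)
  · show ⋂ n, A n v = M.hutchinson (fun v => ⋂ n, A n v) v
    rw [M.hutchinson_iInter hA hAT]
    simp only [← hA_succ]
    exact (Antitone.iInf_nat_add (fun _ _ h => hA h v) 1).symm

end MWGraph

/-- Every Mauldin–Williams graph has a unique invariant list: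
there is exactly one family `(K v)_{v ∈ V}` of nonempty compact sets `K v ⊆ T v`
with `K v = ⋃_{e ∈ E, s e = v} φ e '' K (r e)` for every `v ∈ V`. -/
theorem MWGraph.existsUnique_invariantList {V E : Type*} [Fintype V] [Fintype E]
    {G : DirGraph V E} {X : Type*} [MetricSpace X] (M : MWGraph G X) :
    ∃! K : V → Set X, M.IsInvariantList K := by
  obtain ⟨K, hK⟩ := M.exists_isInvariantList
  exact ⟨K, hK, fun L hL => hL.unique hK⟩
end

section
/- Let (K_v)_{v∈V} be the invariant list of a Mauldin–Williams graph. If every K_v contains at least two points, then no K_v has an isolated point; equivalently, the invariant set K has no isolated points. -/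
/-- Let `(K v)` be the invariant list of a Mauldin–Williams graph.
If every `K v` contains at least two points, then no `K v` has an isolated point
(equivalently, the invariant set `K`, which is the disjoint union of the `K v`,
has no isolated points). -/
theorem MWGraph.invariantList_no_isolated_points {V E : Type*} [Fintype V] [Fintype E]
    {G : DirGraph V E} {X : Type*} [MetricSpace X] (M : MWGraph G X)
    (K : V → Set X) (hK : M.IsInvariantList K)
    (htwo : ∀ v, ∃ x ∈ K v, ∃ y ∈ K v, x ≠ y) :
    ∀ v, ∀ x ∈ K v, ∀ ε > 0, ∃ y ∈ K v, y ≠ x ∧ dist y x < ε := by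

  obtain ⟨hKT, hKc, hKne, hKinv⟩ := hK
  -- diameter bound
  set D : ℝ := Metric.diam (⋃ v, K v) with hD
  have hbdd : Bornology.IsBounded (⋃ v, K v) :=
    (isCompact_iUnion hKc).isBounded
  have hdistD : ∀ v, ∀ x ∈ K v, ∀ y ∈ K v, dist x y ≤ D := by
    intro v x hx y hy
    exact Metric.dist_le_diam_of_mem hbdd (Set.mem_iUnion.2 ⟨v, hx⟩)
      (Set.mem_iUnion.2 ⟨v, hy⟩)
  have hc0 : 0 < M.c := lt_of_lt_of_le M.c₁_pos M.c₁_le_c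
  -- main induction
  have main : ∀ n : ℕ, ∀ v, ∀ x ∈ K v, ∃ y ∈ K v, y ≠ x ∧ dist y x ≤ M.c ^ n * D := by
    intro n
    induction n with
    | zero =>
      intro v x hx
      obtain ⟨a, ha, b, hb, hab⟩ := htwo v
      rcases eq_or_ne a x with rfl | hax
      · exact ⟨b, hb, fun h => hab h.symm, by simpa using hdistD v b hb a ha⟩
      · exact ⟨a, ha, hax, by simpa using hdistD v a ha x hx⟩
    | succ n ih =>
      intro v x hx
      rw [hKinv v] at hx
      simp only [Set.mem_iUnion, Set.mem_setOf_eq] at hx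
      obtain ⟨e, he, x', hx', hxeq⟩ := hx
      obtain ⟨y', hy', hy'ne, hy'dist⟩ := ih (G.r e) x' hx'
      refine ⟨M.φ e y', ?_, ?_, ?_⟩
      · rw [hKinv v]
        exact Set.mem_iUnion₂.2 ⟨e, he, ⟨y', hy', rfl⟩⟩
      · intro h
        have hlow := M.lower e y' (hKT _ hy') x' (hKT _ hx')
        have heq : M.φ e y' = M.φ e x' := h.trans hxeq.symm
        rw [heq, dist_self] at hlow
        have : dist y' x' ≤ 0 := nonpos_of_mul_nonpos_right hlow M.c₁_pos
        exact hy'ne (dist_le_zero.mp this)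
      · rw [← hxeq]
        calc dist (M.φ e y') (M.φ e x') ≤ M.c * dist y' x' :=
              M.upper e y' (hKT _ hy') x' (hKT _ hx')
          _ ≤ M.c * (M.c ^ n * D) := by
              exact mul_le_mul_of_nonneg_left hy'dist hc0.le
          _ = M.c ^ (n + 1) * D := by ring
  -- choose n with c^n * D < ε
  intro v x hx ε hε
  have htend : Filter.Tendsto (fun n : ℕ => M.c ^ n * D) Filter.atTop (nhds 0) := by
    simpa using (tendsto_pow_atTop_nhds_zero_of_lt_one hc0.le M.c_lt_one).mul_const D
  obtain ⟨n, hn⟩ := (htend.eventually (eventually_lt_nhds hε)).exists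
  obtain ⟨y, hy, hyne, hyd⟩ := main n v x hx
  exact ⟨y, hy, hyne, lt_of_le_of_lt hyd hn⟩
end

section
/- Let a Mauldin–Williams graph have invariant list (K_v)_{v∈V} with invariant set K, and assume K has no isolated points. Then for every continuous function a₀ : K → ℝ with a₀ ≥ 0 and a₀ not identically 0, every integer n ≥ 1, and every ε > 0, there exists a continuous function x : K → [0,1] such that: (i) x vanishes on the zero set of a₀; (ii) sup_{t∈K} x(t) = 1; (iii) sup_{t∈K} x(t)²·a₀(t) > (sup_{t∈K} a₀(t)) − ε; and (iv) x(φ_α(t))·x(t) = 0 for every path α of length k with 1 ≤ k ≤ n and every t ∈ K_{r(α_k)}. (This verifies the Muhly–Solel aperiodicity criterion for the C*-correspondence associated with the Mauldin–Williams graph.) -/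
namespace MWGraph

variable {V E : Type*} {G : DirGraph V E} {X : Type*} [MetricSpace X]

/-- For a finite path `l = [α₁, …, α_k]` (a list of edges), the composition
`φ_{α₁} ∘ ⋯ ∘ φ_{α_k}` applied to a point. -/
def pathMap (M : MWGraph G X) : List E → X → X
  | [], t => t
  | e :: l, t => M.φ e (pathMap M l t)

/-- `l = [α₁, …, α_k]` is a path in `G`: `r αᵢ = s αᵢ₊₁` for consecutive edges. -/
def IsPath (G : DirGraph V E) (l : List E) : Prop :=
  l.Chain' fun a b => G.r a = G.s b

end MWGraph

open Filter Topology Set Metric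

lemma frequently_nhdsNE_mem_of_forall_dist_lt {X : Type*} [PseudoMetricSpace X] {S : Set X} {x : X}
    (h : ∀ ε > 0, ∃ y ∈ S, y ≠ x ∧ dist y x < ε) : ∃ᶠ y in 𝓝[≠] x, y ∈ S := by
  rw [← mem_closure_ne_iff_frequently_within, Metric.mem_closure_iff]
  intro ε hε
  obtain ⟨y, hyS, hyx, hy⟩ := h ε hε
  exact ⟨y, ⟨hyS, hyx⟩, by rwa [dist_comm]⟩

lemma exists_mem_notMem_lt_of_frequently {X : Type*} [TopologicalSpace X] [T1Space X]
    {S F : Set X} {f : X → ℝ} {x : X} {θ : ℝ} (hacc : ∃ᶠ y in 𝓝[≠] x, y ∈ S) (hF : F.Finite)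
    (hf : ContinuousWithinAt f S x) (hθ : θ < f x) : ∃ y ∈ S, y ∉ F ∧ θ < f y := by
  have hlt : ∀ᶠ y in 𝓝 x, y ∈ S → θ < f y :=
    eventually_nhdsWithin_iff.1 (hf.eventually_const_lt hθ)
  have hF' : ∀ᶠ y in 𝓝 x, y ∉ F \ {x} := hF.sdiff.isClosed.isOpen_compl.mem_nhds (by simp)
  obtain ⟨y, hyS, ⟨hfy, hyF⟩, hyx⟩ := (hacc.and_eventually
    ((hlt.and hF').filter_mono nhdsWithin_le_nhds |>.and self_mem_nhdsWithin)).exists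
  exact ⟨y, hyS, fun h => hyF ⟨h, hyx⟩, hfy hyS⟩

lemma exists_continuous_eq_one_of_ne_zero_mem_ball {X : Type*} [MetricSpace X] (p : X)
    {δ : ℝ} (hδ : 0 < δ) :
    ∃ x : C(X, ℝ), x p = 1 ∧ (∀ t, x t ∈ Icc 0 1) ∧ ∀ t, x t ≠ 0 → t ∈ ball p δ := by
  obtain ⟨x, hx0, hx1, hx01⟩ := exists_continuous_zero_one_of_isClosed isOpen_ball.isClosed_compl
    isClosed_singleton (disjoint_singleton_right.2 (not_not.2 (mem_ball_self hδ)) :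
      Disjoint (ball p δ)ᶜ {p})
  exact ⟨x, hx1 rfl, hx01, fun t ht => not_not.1 fun h => ht (hx0 h)⟩

namespace MWGraph

variable {V E : Type*} {G : DirGraph V E} {X : Type*} [MetricSpace X] (M : MWGraph G X)

lemma isPath_cons_cons {e e' : E} {l : List E} :
    IsPath G (e :: e' :: l) ↔ G.r e = G.s e' ∧ IsPath G (e' :: l) :=
  List.isChain_cons_cons

lemma c_nonneg : 0 ≤ M.c := M.c₁_pos.le.trans M.c₁_le_c

lemma mapsTo_pathMap : ∀ {l : List E} (hl : l ≠ []), IsPath G l →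
    MapsTo (M.pathMap l) (M.T (G.r (l.getLast hl))) (M.T (G.s (l.head hl)))
  | [e], _, _ => M.maps_to e
  | e :: e' :: l, _, hpath => by
    rw [isPath_cons_cons] at hpath
    intro t ht
    rw [List.getLast_cons_cons] at ht
    exact M.maps_to e (hpath.1 ▸ mapsTo_pathMap (List.cons_ne_nil e' l) hpath.2 ht)

lemma dist_pathMap_le : ∀ {l : List E} (hl : l ≠ []), IsPath G l →
    ∀ {x y : X}, x ∈ M.T (G.r (l.getLast hl)) → y ∈ M.T (G.r (l.getLast hl)) →
      dist (M.pathMap l x) (M.pathMap l y) ≤ M.c ^ l.length * dist x y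
  | [e], _, _, x, y, hx, hy => by simpa [pathMap] using M.upper e x hx y hy
  | e :: e' :: l, _, hpath, x, y, hx, hy => by
    rw [isPath_cons_cons] at hpath
    rw [List.getLast_cons_cons] at hx hy
    have hmaps := M.mapsTo_pathMap (List.cons_ne_nil e' l) hpath.2
    calc dist (M.pathMap (e :: e' :: l) x) (M.pathMap (e :: e' :: l) y)
        ≤ M.c * dist (M.pathMap (e' :: l) x) (M.pathMap (e' :: l) y) :=
          M.upper e _ (hpath.1 ▸ hmaps hx) _ (hpath.1 ▸ hmaps hy)
      _ ≤ M.c * (M.c ^ (e' :: l).length * dist x y) :=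
          mul_le_mul_of_nonneg_left (dist_pathMap_le _ hpath.2 hx hy) M.c_nonneg
      _ = M.c ^ (e :: e' :: l).length * dist x y := by simp only [List.length_cons]; ring

lemma eq_of_pathMap_eq_self {l : List E} (hl : l ≠ []) (hpath : IsPath G l) {z w : X}
    (hz : z ∈ M.T (G.r (l.getLast hl))) (hw : w ∈ M.T (G.r (l.getLast hl)))
    (hfz : M.pathMap l z = z) (hfw : M.pathMap l w = w) : z = w := by
  have hdist := M.dist_pathMap_le hl hpath hz hw
  rw [hfz, hfw] at hdist
  have hc : M.c ^ l.length < 1 := pow_lt_one₀ M.c_nonneg M.c_lt_one (by simpa using hl)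
  exact dist_le_zero.1 (by nlinarith [dist_nonneg (x := z) (y := w)])

def periodicPts (n : ℕ) : Set X :=
  {z | ∃ (l : List E) (hl : l ≠ []), l.length ≤ n ∧ IsPath G l ∧
    z ∈ M.T (G.r (l.getLast hl)) ∧ M.pathMap l z = z}

lemma finite_periodicPts [Finite E] (n : ℕ) : (M.periodicPts n).Finite := by
  have hcover : M.periodicPts n ⊆ ⋃ l ∈ {l : List E | l.length ≤ n},
      {z | ∃ (hl : l ≠ []), IsPath G l ∧ z ∈ M.T (G.r (l.getLast hl)) ∧ M.pathMap l z = z} := by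
    rintro z ⟨l, hl, hlen, hz⟩
    exact mem_biUnion hlen ⟨hl, hz⟩
  refine ((List.finite_length_le E n).biUnion fun l _ => Subsingleton.finite ?_).subset hcover
  rintro z ⟨hl, hpath, hz, hfz⟩ w ⟨_, -, hw, hfw⟩
  exact M.eq_of_pathMap_eq_self hl hpath hz hw hfz hfw

lemma eventually_pathMap_notMem_ball {l : List E} (hl : l ≠ []) (hpath : IsPath G l) {p : X}
    (hp : p ∈ M.T (G.r (l.getLast hl)) → M.pathMap l p ≠ p) :
    ∀ᶠ δ in 𝓝[>] 0, ∀ t ∈ M.T (G.r (l.getLast hl)), t ∈ ball p δ → M.pathMap l t ∉ ball p δ := by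
  by_cases hpT : p ∈ M.T (G.r (l.getLast hl))
  · have hd : 0 < dist (M.pathMap l p) p := dist_pos.2 (hp hpT)
    filter_upwards [Ioo_mem_nhdsGT (half_pos hd)] with δ hδ t ht htp hft
    rw [mem_ball] at htp hft
    have hcontr : dist (M.pathMap l t) (M.pathMap l p) ≤ dist t p :=
      (M.dist_pathMap_le hl hpath ht hpT).trans
        (mul_le_of_le_one_left dist_nonneg (pow_le_one₀ M.c_nonneg M.c_lt_one.le))
    linarith [hδ.2, dist_triangle_left (M.pathMap l p) p (M.pathMap l t)]
  · filter_upwards [(eventually_ball_subset ((M.T_compact _).isClosed.isOpen_compl.mem_nhds hpT)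
      ).filter_mono nhdsWithin_le_nhds] with δ hδ t ht htp
    exact absurd ht (hδ htp)

lemma eventually_forall_pathMap_notMem_ball [Finite E] (n : ℕ) {p : X}
    (hp : p ∉ M.periodicPts n) :
    ∀ᶠ δ in 𝓝[>] 0, ∀ (l : List E) (hl : l ≠ []), l.length ≤ n → IsPath G l →
      ∀ t ∈ M.T (G.r (l.getLast hl)), t ∈ ball p δ → M.pathMap l t ∉ ball p δ := by
  have h := (eventually_all_finite (List.finite_length_le E n)).2 fun l hlen =>
    eventually_all.2 fun hl => eventually_imp_distrib_left.2 fun hpath =>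
      M.eventually_pathMap_notMem_ball hl hpath fun hpT hfix => hp ⟨l, hl, hlen, hpath, hpT, hfix⟩
  filter_upwards [h] with δ hδ l hl hlen hpath
  exact hδ l hlen hl hpath

end MWGraph

theorem MWGraph.aperiodicity_criterion_general {V E : Type*} [Fintype V] [Fintype E]
    {G : DirGraph V E} {X : Type*} [MetricSpace X] (M : MWGraph G X)
    (K : V → Set X) (hK : M.IsInvariantList K)
    (hnoiso : ∀ v, ∀ x ∈ K v, ∀ ε > 0, ∃ y ∈ K v, y ≠ x ∧ dist y x < ε)
    (a₀ : X → ℝ) (ha₀cont : ContinuousOn a₀ (⋃ v, K v))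
    (ha₀nonneg : ∀ t ∈ ⋃ v, K v, 0 ≤ a₀ t)
    (ha₀ne : ∃ t ∈ ⋃ v, K v, a₀ t ≠ 0)
    (n : ℕ) (ε : ℝ) (hε : 0 < ε) :
    ∃ x : X → ℝ,
      ContinuousOn x (⋃ v, K v) ∧
      (∀ t ∈ ⋃ v, K v, x t ∈ Set.Icc (0 : ℝ) 1) ∧
      (∀ t ∈ ⋃ v, K v, a₀ t = 0 → x t = 0) ∧
      sSup (x '' (⋃ v, K v)) = 1 ∧
      sSup ((fun t => (x t) ^ 2 * a₀ t) '' (⋃ v, K v)) > sSup (a₀ '' (⋃ v, K v)) - ε ∧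
      ∀ (l : List E) (hl : l ≠ []), l.length ≤ n → MWGraph.IsPath G l →
        ∀ t ∈ K (G.r (l.getLast hl)), x (M.pathMap l t) * x t = 0 := by
  obtain ⟨hKT, hKcomp, -, -⟩ := hK
  have hcomp : IsCompact (⋃ v, K v) := isCompact_iUnion hKcomp
  obtain ⟨t, ht, hat⟩ := ha₀ne
  obtain ⟨t₀, ht₀, hmax⟩ := hcomp.exists_isMaxOn ⟨t, ht⟩ ha₀cont
  have hsup : sSup (a₀ '' ⋃ v, K v) = a₀ t₀ :=
    IsGreatest.csSup_eq ⟨mem_image_of_mem a₀ ht₀, forall_mem_image.2 hmax⟩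
  have hpos : 0 < a₀ t₀ := ((ha₀nonneg t ht).lt_of_ne' hat).trans_le (hmax ht)
  have hacc : ∃ᶠ y in 𝓝[≠] t₀, y ∈ ⋃ v, K v := by
    obtain ⟨v, hv⟩ := mem_iUnion.1 ht₀
    exact (frequently_nhdsNE_mem_of_forall_dist_lt (hnoiso v t₀ hv)).mono
      fun y hy => mem_iUnion_of_mem v hy
  obtain ⟨t₁, ht₁, hper, hbig⟩ := exists_mem_notMem_lt_of_frequently hacc
    (M.finite_periodicPts n) (ha₀cont t₀ ht₀) (max_lt (sub_lt_self _ hε) hpos)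
  have hposNear : ∀ᶠ y in 𝓝 t₁, y ∈ ⋃ v, K v → 0 < a₀ y := eventually_nhdsWithin_iff.1
    ((ha₀cont t₁ ht₁).eventually_const_lt ((le_max_right _ _).trans_lt hbig))
  obtain ⟨δ, ⟨hmove, hball⟩, hδ⟩ := ((M.eventually_forall_pathMap_notMem_ball n hper).and
    ((eventually_ball_subset hposNear).filter_mono nhdsWithin_le_nhds) |>.and
      self_mem_nhdsWithin).exists
  obtain ⟨x, hx1, hx01, hxsupp⟩ := exists_continuous_eq_one_of_ne_zero_mem_ball t₁ hδ
  refine ⟨x, x.continuous.continuousOn, fun t _ => hx01 t, ?_, ?_, ?_, ?_⟩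
  · intro t ht ha
    by_contra hx
    exact (hball (hxsupp t hx) ht).ne' ha
  · exact IsGreatest.csSup_eq ⟨⟨t₁, ht₁, hx1⟩, forall_mem_image.2 fun t _ => (hx01 t).2⟩
  · have hbdd := hcomp.bddAbove_image ((x.continuous.pow 2).continuousOn.mul ha₀cont)
    calc sSup (a₀ '' ⋃ v, K v) - ε = a₀ t₀ - ε := by rw [hsup]
      _ < a₀ t₁ := (le_max_left _ _).trans_lt hbig
      _ = x t₁ ^ 2 * a₀ t₁ := by rw [hx1, one_pow, one_mul]
      _ ≤ _ := le_csSup hbdd (mem_image_of_mem _ ht₁)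
  · intro l hl hlen hpath t ht
    by_contra h
    obtain ⟨hxp, hxt⟩ := mul_ne_zero_iff.1 h
    exact hmove l hl hlen hpath t (hKT _ ht) (hxsupp t hxt) (hxsupp _ hxp)

/-- (Muhly–Solel aperiodicity criterion for the correspondence of a
Mauldin–Williams graph.)  Let `(K v)` be the invariant list, with invariant set
`K = ⋃ v, K v` having no isolated points.  For every continuous `a₀ : K → ℝ` with
`a₀ ≥ 0`, `a₀` not identically `0`, every `n ≥ 1` and every `ε > 0` there is a
continuous `x : K → [0,1]` vanishing on the zero set of `a₀`, with
`sup x = 1`, `sup (x² · a₀) > sup a₀ - ε`, and `x (φ_α t) * x t = 0` for every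
path `α` of length `1 ≤ k ≤ n` and every `t ∈ K (r α_k)`. -/
theorem MWGraph.aperiodicity_criterion {V E : Type*} [Fintype V] [Fintype E]
    {G : DirGraph V E} {X : Type*} [MetricSpace X] (M : MWGraph G X)
    (K : V → Set X) (hK : M.IsInvariantList K)
    (hnoiso : ∀ v, ∀ x ∈ K v, ∀ ε > 0, ∃ y ∈ K v, y ≠ x ∧ dist y x < ε)
    (a₀ : X → ℝ) (ha₀cont : ContinuousOn a₀ (⋃ v, K v))
    (ha₀nonneg : ∀ t ∈ ⋃ v, K v, 0 ≤ a₀ t)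
    (ha₀ne : ∃ t ∈ ⋃ v, K v, a₀ t ≠ 0)
    (n : ℕ) (hn : 1 ≤ n) (ε : ℝ) (hε : 0 < ε) :
    ∃ x : X → ℝ,
      ContinuousOn x (⋃ v, K v) ∧
      (∀ t ∈ ⋃ v, K v, x t ∈ Set.Icc (0 : ℝ) 1) ∧
      (∀ t ∈ ⋃ v, K v, a₀ t = 0 → x t = 0) ∧
      sSup (x '' (⋃ v, K v)) = 1 ∧
      sSup ((fun t => (x t) ^ 2 * a₀ t) '' (⋃ v, K v)) > sSup (a₀ '' (⋃ v, K v)) - ε ∧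
      ∀ (l : List E) (hl : l ≠ []), l.length ≤ n → MWGraph.IsPath G l →
        ∀ t ∈ K (G.r (l.getLast hl)), x (M.pathMap l t) * x t = 0 :=
  MWGraph.aperiodicity_criterion_general M K hK hnoiso a₀ ha₀cont ha₀nonneg ha₀ne n ε hε
end

section
/- For i = 1,2 let two Mauldin–Williams graphs over the same underlying graph G = (V,E,r,s) coincide with their invariant lists, with invariant sets K¹, K², algebras A_i = C(Kⁱ, ℂ) and bimodules X_i. Suppose there exist a homeomorphism f : K¹ → K², a partition of K¹ into finitely many open (hence clopen) sets U₁,…,U_m, and permutations σ₁,…,σ_m of E such that for every j ∈ {1,…,m} and every e ∈ E: f(K¹_{r(e)}) = K²_{r(σ_j(e))}, and φ²_{σ_j(e)}(f(x)) = f(φ¹_e(x)) for all x ∈ U_j ∩ K¹_{r(e)}. Then the map V : X₂ → X₁ defined by V(ξ)(e,x) = ξ(σ_j(e), f(x)) whenever x ∈ U_j ∩ K¹_{r(e)} is a correspondence isomorphism over f; in particular X₁ and X₂ are isomorphic. -/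
namespace MWGraph

variable {V E : Type*} [Fintype E] {G : DirGraph V E}

/-- An element of the bimodule `X = C(E ×_G K, ℂ)` associated with a
Mauldin–Williams graph coinciding with its invariant list, encoded as a
function `ξ : E → X → ℂ` which is continuous on `K (r e)` in the second
variable and (as a normalization) vanishes off `K (r e)`. -/
def IsElt {X : Type*} [MetricSpace X] (M : MWGraph G X) (ξ : E → X → ℂ) : Prop :=
  (∀ e, ContinuousOn (ξ e) (M.T (G.r e))) ∧ ∀ e x, x ∉ M.T (G.r e) → ξ e x = 0

/-- The left action of `A = C(K, ℂ)`: `(a · ξ)(e, x) = a (φ e x) * ξ e x`. -/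
def lAct {X : Type*} [MetricSpace X] (M : MWGraph G X) (a : X → ℂ) (ξ : E → X → ℂ) :
    E → X → ℂ :=
  fun e x => a (M.φ e x) * ξ e x

/-- The right action of `A = C(K, ℂ)`: `(ξ · a)(e, x) = ξ e x * a x`. -/
def rAct (ξ : E → X → ℂ) (a : X → ℂ) : E → X → ℂ :=
  fun e x => ξ e x * a x

/-- The `A`-valued inner product
`⟨ξ, η⟩(x) = ∑_{e ∈ E, x ∈ K (r e)} conj (ξ e x) * η e x` (thanks to the
normalization in `IsElt`, the sum may be taken over all edges). -/
noncomputable def innerProd {X : Type*} (ξ η : E → X → ℂ) : X → ℂ :=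
  fun x => ∑ e : E, (starRingEnd ℂ) (ξ e x) * η e x

/-- A correspondence isomorphism `W : X₂ → X₁` over a homeomorphism
`f : K¹ → K²`: a bijective linear map between the bimodules with
`W (a·ξ·b) = (a ∘ f) · W ξ · (b ∘ f)` and `⟨W ξ, W η⟩_{A₁} = ⟨ξ, η⟩_{A₂} ∘ f`. -/
structure CorrIso {X₁ X₂ : Type*} [MetricSpace X₁] [MetricSpace X₂]
    (M₁ : MWGraph G X₁) (M₂ : MWGraph G X₂) (f : X₁ → X₂)
    (W : (E → X₂ → ℂ) → (E → X₁ → ℂ)) : Prop where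
  maps : ∀ ξ, IsElt M₂ ξ → IsElt M₁ (W ξ)
  map_add : ∀ ξ η, IsElt M₂ ξ → IsElt M₂ η → W (ξ + η) = W ξ + W η
  map_smul : ∀ (z : ℂ) ξ, IsElt M₂ ξ → W (z • ξ) = z • W ξ
  bimodule : ∀ (a b : X₂ → ℂ) ξ, ContinuousOn a M₂.KK → ContinuousOn b M₂.KK →
    IsElt M₂ ξ → W (lAct M₂ a (rAct ξ b)) = lAct M₁ (a ∘ f) (rAct (W ξ) (b ∘ f))
  inner_eq : ∀ ξ η, IsElt M₂ ξ → IsElt M₂ η → ∀ x ∈ M₁.KK,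
    innerProd (W ξ) (W η) x = innerProd ξ η (f x)
  injective : ∀ ξ η, IsElt M₂ ξ → IsElt M₂ η → W ξ = W η → ξ = η
  surjective : ∀ η, IsElt M₁ η → ∃ ξ, IsElt M₂ ξ ∧ W ξ = η

end MWGraph

/-!
On each clopen piece `U j` the map `f` conjugates the edge maps up to the relabelling `σ j`,
so `V` is a pullback along `f` twisted by the locally constant permutation `x ↦ σ_j`.
Local constancy makes `V ξ` continuous, the twist is absorbed by reindexing the sum defining the
inner product, and the pullback along `g = f⁻¹` twisted by `y ↦ (σ_j)⁻¹` for `g y ∈ U j` is an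
inverse of `V`.
-/

open Set Filter Topology Function

theorem exists_eq_on_pieces_of_relOpen_partition {ι X β : Type*} [TopologicalSpace X]
    [Nonempty β] {K : Set X} (U : ι → Set X) (hUopen : ∀ j, ∃ O, IsOpen O ∧ U j = O ∩ K)
    (hUdisj : Pairwise (Disjoint on U)) (hUcover : ⋃ j, U j = K) (σ : ι → β) :
    ∃ τ : X → β, (∀ j, ∀ x ∈ U j, τ x = σ j) ∧ ∀ x ∈ K, ∀ᶠ y in 𝓝[K] x, τ y = τ x := by
  classical
  let τ : X → β := fun x => if h : ∃ j, x ∈ U j then σ h.choose else Classical.arbitrary β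
  have hτ : ∀ j, ∀ x ∈ U j, τ x = σ j := by
    intro j x hx
    have h : ∃ j, x ∈ U j := ⟨j, hx⟩
    have hj : h.choose = j := by
      by_contra hne
      exact disjoint_left.mp (hUdisj hne) h.choose_spec hx
    simp only [τ, dif_pos h, hj]
  refine ⟨τ, hτ, fun x hx => ?_⟩
  obtain ⟨j, hxj⟩ := mem_iUnion.mp (hUcover ▸ hx)
  obtain ⟨O, hO, hUj⟩ := hUopen j
  have hxO : x ∈ O := (hUj ▸ hxj).1
  filter_upwards [mem_nhdsWithin_of_mem_nhds (hO.mem_nhds hxO), self_mem_nhdsWithin]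
    with y hyO hyK
  rw [hτ j y (hUj ▸ ⟨hyO, hyK⟩), hτ j x hxj]

namespace MWGraph

variable {V E : Type*} {G : DirGraph V E} {X₁ X₂ : Type*} [MetricSpace X₁]

theorem T_subset_KK (M : MWGraph G X₁) (v : V) : M.T v ⊆ M.KK :=
  subset_iUnion M.T v

noncomputable def pullback (M : MWGraph G X₁) (f : X₁ → X₂) (τ : X₁ → Equiv.Perm E) :
    (E → X₂ → ℂ) →ₗ[ℂ] (E → X₁ → ℂ) where
  toFun ξ e := (M.T (G.r e)).indicator fun x => ξ (τ x e) (f x)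
  map_add' ξ η := by
    ext e x
    exact congrFun (indicator_add _ _ _) x
  map_smul' z ξ := by
    ext e x
    exact indicator_const_smul_apply _ z _ x

section pullback

variable {M₁ : MWGraph G X₁} {f : X₁ → X₂} {τ : X₁ → Equiv.Perm E}

theorem pullback_apply (ξ : E → X₂ → ℂ) (e : E) (x : X₁) :
    pullback M₁ f τ ξ e x = (M₁.T (G.r e)).indicator (fun x => ξ (τ x e) (f x)) x :=
  rfl

theorem pullback_apply_of_mem {ξ : E → X₂ → ℂ} {e : E} {x : X₁} (hx : x ∈ M₁.T (G.r e)) :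
    pullback M₁ f τ ξ e x = ξ (τ x e) (f x) :=
  (pullback_apply ξ e x).trans (indicator_of_mem hx _)

variable [MetricSpace X₂] {M₂ : MWGraph G X₂}

theorem pullback_apply_of_isElt {ξ : E → X₂ → ℂ} (hξ : IsElt M₂ ξ) {x : X₁}
    (hx : ∀ e, f x ∈ M₂.T (G.r (τ x e)) → x ∈ M₁.T (G.r e)) (e : E) :
    pullback M₁ f τ ξ e x = ξ (τ x e) (f x) := by
  by_cases he : x ∈ M₁.T (G.r e)
  · exact pullback_apply_of_mem he
  · rw [pullback_apply, indicator_of_notMem he, hξ.2 _ _ (mt (hx e) he)]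

theorem isElt_pullback {ξ : E → X₂ → ℂ} (hξ : IsElt M₂ ξ)
    (hfc : ContinuousOn f M₁.KK) (hτ : ∀ x ∈ M₁.KK, ∀ᶠ y in 𝓝[M₁.KK] x, τ y = τ x)
    (hmaps : ∀ e, ∀ x ∈ M₁.T (G.r e), f x ∈ M₂.T (G.r (τ x e))) :
    IsElt M₁ (pullback M₁ f τ ξ) := by
  refine ⟨fun e x hx => ?_, fun e x hx =>
    (pullback_apply ξ e x).trans (indicator_of_notMem hx _)⟩
  have hloc : {y | τ y = τ x} ∈ 𝓝[M₁.T (G.r e)] x :=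
    nhdsWithin_mono _ (M₁.T_subset_KK _) (hτ x (M₁.T_subset_KK _ hx))
  rw [← continuousWithinAt_inter' hloc]
  have hmaps' : MapsTo f (M₁.T (G.r e) ∩ {y | τ y = τ x}) (M₂.T (G.r (τ x e))) := by
    rintro y ⟨hy, hτy⟩
    simpa [show τ y = τ x from hτy] using hmaps e y hy
  refine (((hξ.1 _).comp (hfc.mono (inter_subset_left.trans (M₁.T_subset_KK _))) hmaps')
    x ⟨hx, rfl⟩).congr ?_ (pullback_apply_of_mem hx)
  rintro y ⟨hy, hτy⟩
  rw [pullback_apply_of_mem hy, show τ y = τ x from hτy]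
  rfl

theorem pullback_pullback_eq_self {g : X₂ → X₁} {τ' : X₂ → Equiv.Perm E} {η : E → X₁ → ℂ}
    (hη : IsElt M₁ η)
    (h : ∀ e, ∀ x ∈ M₁.T (G.r e), f x ∈ M₂.T (G.r (τ x e)) ∧ τ' (f x) (τ x e) = e ∧ g (f x) = x) :
    pullback M₁ f τ (pullback M₂ g τ' η) = η := by
  ext e x
  by_cases hx : x ∈ M₁.T (G.r e)
  · obtain ⟨hfx, hτ', hgf⟩ := h e x hx
    rw [pullback_apply_of_mem hx, pullback_apply_of_mem hfx, hτ', hgf]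
  · rw [pullback_apply, indicator_of_notMem hx, hη.2 e x hx]

theorem pullback_lAct_rAct (hφ : ∀ e, ∀ x ∈ M₁.T (G.r e), M₂.φ (τ x e) (f x) = f (M₁.φ e x))
    (a b : X₂ → ℂ) (ξ : E → X₂ → ℂ) :
    pullback M₁ f τ (lAct M₂ a (rAct ξ b)) =
      lAct M₁ (a ∘ f) (rAct (pullback M₁ f τ ξ) (b ∘ f)) := by
  ext e x
  by_cases hx : x ∈ M₁.T (G.r e)
  · simp only [lAct, rAct, pullback_apply_of_mem hx, hφ e x hx, comp_apply]
  · simp only [lAct, rAct, pullback_apply, indicator_of_notMem hx, mul_zero, zero_mul]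

variable [Fintype E]

theorem innerProd_pullback {ξ η : E → X₂ → ℂ} (hξ : IsElt M₂ ξ) (hη : IsElt M₂ η) {x : X₁}
    (hx : ∀ e, f x ∈ M₂.T (G.r (τ x e)) → x ∈ M₁.T (G.r e)) :
    innerProd (pullback M₁ f τ ξ) (pullback M₁ f τ η) x = innerProd ξ η (f x) := by
  simp only [innerProd, pullback_apply_of_isElt hξ hx, pullback_apply_of_isElt hη hx]
  exact Equiv.sum_comp (τ x) fun e => (starRingEnd ℂ) (ξ e (f x)) * η e (f x)

theorem corrIso_pullback {g : X₂ → X₁} (hfc : ContinuousOn f M₁.KK)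
    (hgc : ContinuousOn g M₂.KK) (hg : MapsTo g M₂.KK M₁.KK)
    (hgf : ∀ x ∈ M₁.KK, g (f x) = x) (hfg : ∀ y ∈ M₂.KK, f (g y) = y)
    (hτ : ∀ x ∈ M₁.KK, ∀ᶠ y in 𝓝[M₁.KK] x, τ y = τ x)
    (hT : ∀ e, ∀ x ∈ M₁.KK, f x ∈ M₂.T (G.r (τ x e)) ↔ x ∈ M₁.T (G.r e))
    (hφ : ∀ e, ∀ x ∈ M₁.T (G.r e), M₂.φ (τ x e) (f x) = f (M₁.φ e x)) :
    CorrIso M₁ M₂ f (pullback M₁ f τ) := by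
  let τ' : X₂ → Equiv.Perm E := fun y => (τ (g y)).symm
  have hT' : ∀ e, ∀ y ∈ M₂.T (G.r e), g y ∈ M₁.T (G.r (τ' y e)) := fun e y hy => by
    have hyK := M₂.T_subset_KK _ hy
    rw [← hT _ _ (hg hyK), hfg y hyK]
    simpa [τ'] using hy
  have hτ' : ∀ y ∈ M₂.KK, ∀ᶠ z in 𝓝[M₂.KK] y, τ' z = τ' y := fun y hy =>
    (((hgc y hy).tendsto_nhdsWithin hg).eventually (hτ _ (hg hy))).mono fun z hz => by
      simp only [τ', hz]
  have hleft : ∀ η, IsElt M₁ η → pullback M₁ f τ (pullback M₂ g τ' η) = η := fun η hη =>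
    pullback_pullback_eq_self hη fun e x hx => by
      have hxK := M₁.T_subset_KK _ hx
      exact ⟨(hT e x hxK).2 hx, by simp [τ', hgf x hxK], hgf x hxK⟩
  have hright : ∀ ξ, IsElt M₂ ξ → pullback M₂ g τ' (pullback M₁ f τ ξ) = ξ := fun ξ hξ =>
    pullback_pullback_eq_self hξ fun e y hy =>
      ⟨hT' e y hy, by simp [τ'], hfg y (M₂.T_subset_KK _ hy)⟩
  exact
    { maps := fun ξ hξ =>
        isElt_pullback hξ hfc hτ fun e x hx => (hT e x (M₁.T_subset_KK _ hx)).2 hx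
      map_add := fun ξ η _ _ => map_add _ ξ η
      map_smul := fun z ξ _ => map_smul _ z ξ
      bimodule := fun a b ξ _ _ _ => pullback_lAct_rAct hφ a b ξ
      inner_eq := fun ξ η hξ hη x hx => innerProd_pullback hξ hη fun e => (hT e x hx).1
      injective := fun ξ η hξ hη h => by rw [← hright ξ hξ, ← hright η hη, h]
      surjective := fun η hη => ⟨_, isElt_pullback hη hgc hτ' hT', hleft η hη⟩ }

end pullback

end MWGraph

theorem MWGraph.corrIso_of_local_conjugacy_general {V E : Type*} [Fintype E]
    {X₁ X₂ : Type*} [MetricSpace X₁] [MetricSpace X₂] {G : DirGraph V E}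
    (M₁ : MWGraph G X₁) (M₂ : MWGraph G X₂)
    (f : X₁ → X₂) (g : X₂ → X₁)
    (hg : Set.MapsTo g M₂.KK M₁.KK)
    (hfc : ContinuousOn f M₁.KK) (hgc : ContinuousOn g M₂.KK)
    (hgf : ∀ x ∈ M₁.KK, g (f x) = x) (hfg : ∀ y ∈ M₂.KK, f (g y) = y)
    (m : ℕ) (U : Fin m → Set X₁)
    (hUopen : ∀ j, ∃ O : Set X₁, IsOpen O ∧ U j = O ∩ M₁.KK)
    (hUdisj : ∀ j j', j ≠ j' → Disjoint (U j) (U j'))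
    (hUcover : (⋃ j, U j) = M₁.KK)
    (σ : Fin m → Equiv.Perm E)
    (hrange : ∀ (j : Fin m) (e : E), f '' M₁.T (G.r e) = M₂.T (G.r (σ j e)))
    (hconj : ∀ (j : Fin m) (e : E), ∀ x ∈ U j ∩ M₁.T (G.r e),
      M₂.φ (σ j e) (f x) = f (M₁.φ e x)) :
    ∃ W : (E → X₂ → ℂ) → (E → X₁ → ℂ),
      MWGraph.CorrIso M₁ M₂ f W ∧
      ∀ ξ, MWGraph.IsElt M₂ ξ → ∀ (j : Fin m) (e : E), ∀ x ∈ U j ∩ M₁.T (G.r e),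
        W ξ e x = ξ (σ j e) (f x) := by
  obtain ⟨τ, hτσ, hτ⟩ := exists_eq_on_pieces_of_relOpen_partition U hUopen
    (fun j j' => hUdisj j j') hUcover σ
  have hpiece : ∀ x ∈ M₁.KK, ∃ j, x ∈ U j := fun x hx => mem_iUnion.mp (hUcover ▸ hx)
  have hfinj : InjOn f M₁.KK := fun x hx y hy h => by rw [← hgf x hx, ← hgf y hy, h]
  refine ⟨MWGraph.pullback M₁ f τ, MWGraph.corrIso_pullback hfc hgc hg hgf hfg hτ ?_ ?_, ?_⟩
  · intro e x hx
    obtain ⟨j, hj⟩ := hpiece x hx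
    rw [hτσ j x hj, ← hrange j e]
    exact hfinj.mem_image_iff (M₁.T_subset_KK _) hx
  · intro e x hx
    obtain ⟨j, hj⟩ := hpiece x (M₁.T_subset_KK _ hx)
    rw [hτσ j x hj]
    exact hconj j e x ⟨hj, hx⟩
  · rintro ξ - j e x ⟨hj, hx⟩
    rw [MWGraph.pullback_apply_of_mem hx, hτσ j x hj]

/-- If there are a homeomorphism `f : K¹ → K²`, a partition of `K¹`
into finitely many (cl)open subsets `U₁, …, U_m`, and permutations `σ₁, …, σ_m` of `E`
with `f (K¹ (r e)) = K² (r (σ_j e))` and `φ² (σ_j e) (f x) = f (φ¹ e x)` for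
`x ∈ U_j ∩ K¹ (r e)`, then the map `V ξ (e, x) = ξ (σ_j e, f x)` (for `x ∈ U_j ∩ K¹ (r e)`)
is a correspondence isomorphism over `f`; in particular `X₁ ≅ X₂`. -/
theorem MWGraph.corrIso_of_local_conjugacy {V E : Type*} [Fintype V] [Fintype E]
    {X₁ X₂ : Type*} [MetricSpace X₁] [MetricSpace X₂] {G : DirGraph V E}
    (M₁ : MWGraph G X₁) (M₂ : MWGraph G X₂)
    (hM₁ : M₁.SelfInvariant) (hM₂ : M₂.SelfInvariant)
    (f : X₁ → X₂) (g : X₂ → X₁)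
    (hf : Set.MapsTo f M₁.KK M₂.KK) (hg : Set.MapsTo g M₂.KK M₁.KK)
    (hfc : ContinuousOn f M₁.KK) (hgc : ContinuousOn g M₂.KK)
    (hgf : ∀ x ∈ M₁.KK, g (f x) = x) (hfg : ∀ y ∈ M₂.KK, f (g y) = y)
    (m : ℕ) (U : Fin m → Set X₁)
    (hUopen : ∀ j, ∃ O : Set X₁, IsOpen O ∧ U j = O ∩ M₁.KK)
    (hUdisj : ∀ j j', j ≠ j' → Disjoint (U j) (U j'))
    (hUcover : (⋃ j, U j) = M₁.KK)
    (σ : Fin m → Equiv.Perm E)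
    (hrange : ∀ (j : Fin m) (e : E), f '' M₁.T (G.r e) = M₂.T (G.r (σ j e)))
    (hconj : ∀ (j : Fin m) (e : E), ∀ x ∈ U j ∩ M₁.T (G.r e),
      M₂.φ (σ j e) (f x) = f (M₁.φ e x)) :
    ∃ W : (E → X₂ → ℂ) → (E → X₁ → ℂ),
      MWGraph.CorrIso M₁ M₂ f W ∧
      ∀ ξ, MWGraph.IsElt M₂ ξ → ∀ (j : Fin m) (e : E), ∀ x ∈ U j ∩ M₁.T (G.r e),
        W ξ e x = ξ (σ j e) (f x) :=
  MWGraph.corrIso_of_local_conjugacy_general M₁ M₂ f g hg hfc hgc hgf hfg m U hUopen hUdisj hUcover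
    σ hrange hconj
end

section
/- For i = 1,2 let two Mauldin–Williams graphs over the same underlying graph G = (V,E,r,s) coincide with their invariant lists, with invariant sets K¹, K², algebras A_i = C(Kⁱ, ℂ) and bimodules X_i. If there exist a homeomorphism f : K¹ → K² and a correspondence isomorphism V : X₂ → X₁ over f, then there exist a finite open cover U₁,…,U_m of K¹ and permutations σ₁,…,σ_m of E such that for every j ∈ {1,…,m}, every e ∈ E, and every x ∈ U_j with f(x) ∈ K²_{r(e)}: x ∈ K¹_{r(σ_j(e))} and f(φ¹_{σ_j(e)}(x)) = φ²_e(f(x)). -/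
section MWAuxSect

open MWGraph

variable {V E : Type*} [Fintype E] {G : DirGraph V E}

set_option linter.unusedSectionVars false

open Classical in
/-- The indicator element of the bimodule supported on edge `g`. -/
noncomputable def MWAux.xig {X : Type*} [MetricSpace X] (M : MWGraph G X) (g : E) :
    E → X → ℂ :=
  fun e x => if e = g ∧ x ∈ M.T (G.r g) then 1 else 0

namespace MWAux

variable {X : Type*} [MetricSpace X]

lemma mem_T_iff (M : MWGraph G X) {x : X} {v : V} (hx : x ∈ M.T v) (w : V) :
    x ∈ M.T w ↔ w = v := by
  constructor
  · intro hw
    by_contra hne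
    exact Set.disjoint_left.mp (M.T_disjoint w v hne) hw hx
  · rintro rfl; exact hx

lemma isElt_xig (M : MWGraph G X) (g : E) : IsElt M (xig M g) := by
  classical
  constructor
  · intro e
    by_cases he : e = g
    · subst he
      refine (continuousOn_const (c := (1 : ℂ))).congr ?_
      intro x hx
      simp [xig, hx]
    · refine (continuousOn_const (c := (0 : ℂ))).congr ?_
      intro x hx
      simp [xig, he]
  · intro e x hx
    simp only [xig, ite_eq_right_iff, and_imp]
    rintro rfl hm
    exact absurd hm hx

open Classical in
lemma innerProd_xig (M : MWGraph G X) (g h : E) (y : X) :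
    innerProd (xig M g) (xig M h) y = if g = h ∧ y ∈ M.T (G.r g) then 1 else 0 := by
  classical
  rcases eq_or_ne g h with rfl | hgh
  · by_cases hm : y ∈ M.T (G.r g)
    · simp [innerProd, xig, hm]
    · simp [innerProd, xig, hm]
  · rw [if_neg (by tauto)]
    refine Finset.sum_eq_zero fun e _ => ?_
    by_cases h1 : e = g <;> by_cases h2 : e = h <;> simp_all [xig]

lemma innerProd_self (η : E → X → ℂ) (x : X) :
    innerProd η η x = ((∑ e, Complex.normSq (η e x) : ℝ) : ℂ) := by
  unfold MWGraph.innerProd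
  push_cast
  exact Finset.sum_congr rfl fun e _ => Complex.normSq_eq_conj_mul_self.symm

lemma sum_subtype_vanish {q : E → Prop} [DecidablePred q] (F : E → ℂ)
    (hF : ∀ g, ¬ q g → F g = 0) :
    ∑ g : {g // q g}, F g.1 = ∑ g : E, F g := by
  classical
  rw [← Finset.sum_subtype (Finset.univ.filter q) (by simp) F]
  exact Finset.sum_filter_of_ne fun x _ hx => by_contra fun hq => hx (hF x hq)

end MWAux

end MWAuxSect
section MWAuxSect2

open MWGraph MWAux

variable {V E : Type*} [Fintype E] {G : DirGraph V E}
variable {X₁ X₂ : Type*} [MetricSpace X₁] [MetricSpace X₂]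
  {M₁ : MWGraph G X₁} {M₂ : MWGraph G X₂} {f : X₁ → X₂}
  {W : (E → X₂ → ℂ) → (E → X₁ → ℂ)}

namespace MWAux

lemma fx_mem (hW : CorrIso M₁ M₂ f W) {g e : E} {x : X₁} (hx : x ∈ M₁.KK)
    (hu : W (xig M₂ g) e x ≠ 0) : f x ∈ M₂.T (G.r g) := by
  classical
  by_contra hm
  have h1 := hW.inner_eq (xig M₂ g) (xig M₂ g) (isElt_xig M₂ g) (isElt_xig M₂ g) x hx
  rw [innerProd_xig, if_neg (by tauto), innerProd_self] at h1
  have h2 : ∑ e', Complex.normSq (W (xig M₂ g) e' x) = 0 := by exact_mod_cast h1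
  have h3 := (Finset.sum_eq_zero_iff_of_nonneg
    (fun e' _ => Complex.normSq_nonneg _)).mp h2 e (Finset.mem_univ e)
  exact hu (Complex.normSq_eq_zero.mp h3)

lemma conj_eq (hW : CorrIso M₁ M₂ f W) {g e : E} {x : X₁} (hx : x ∈ M₁.KK)
    (hu : W (xig M₂ g) e x ≠ 0) :
    x ∈ M₁.T (G.r e) ∧ f x ∈ M₂.T (G.r g) ∧ f (M₁.φ e x) = M₂.φ g (f x) := by
  classical
  have hxe : x ∈ M₁.T (G.r e) := by
    by_contra h
    exact hu ((hW.maps _ (isElt_xig M₂ g)).2 e x h)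
  have hfx : f x ∈ M₂.T (G.r g) := fx_mem hW hx hu
  refine ⟨hxe, hfx, ?_⟩
  set p := M₂.φ g (f x) with hp
  have hlip : LipschitzOnWith 1 (fun y => dist (M₂.φ g y) p) (M₂.T (G.r g)) := by
    rw [lipschitzOnWith_iff_dist_le_mul]
    intro y hy z hz
    have h1 : dist (dist (M₂.φ g y) p) (dist (M₂.φ g z) p)
        ≤ dist (M₂.φ g y) (M₂.φ g z) := by
      rw [Real.dist_eq]; exact abs_dist_sub_le _ _ _
    have h2 := M₂.upper g y hy z hz
    have h3 : M₂.c * dist y z ≤ 1 * dist y z := by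
      have hc := M₂.c_lt_one
      nlinarith [dist_nonneg (x := y) (y := z)]
    simpa using h1.trans (h2.trans h3)
  obtain ⟨b₀, hb₀lip, hb₀eq⟩ := hlip.extend_real
  set a : X₂ → ℂ := fun y => ((dist y p : ℝ) : ℂ) with ha
  set b : X₂ → ℂ := fun y => ((b₀ y : ℝ) : ℂ) with hb
  set cone : X₂ → ℂ := fun _ => (1 : ℂ) with hcone
  have haC : ContinuousOn a M₂.KK :=
    (Complex.continuous_ofReal.comp (continuous_id.dist continuous_const)).continuousOn
  have hbC : ContinuousOn b M₂.KK :=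
    (Complex.continuous_ofReal.comp hb₀lip.continuous).continuousOn
  have hcC : ContinuousOn cone M₂.KK := continuousOn_const
  have E1 : lAct M₂ a (rAct (xig M₂ g) cone) = lAct M₂ cone (rAct (xig M₂ g) b) := by
    funext e' x'
    simp only [lAct, rAct, hcone]
    by_cases hc : e' = g ∧ x' ∈ M₂.T (G.r g)
    · obtain ⟨rfl, hx'⟩ := hc
      have hbv : b₀ x' = dist (M₂.φ e' x') p := (hb₀eq hx').symm
      simp [xig, hx', ha, hb, hbv]
    · simp [xig, hc]
  have h2 := hW.bimodule a cone (xig M₂ g) haC hcC (isElt_xig M₂ g)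
  have h3 := hW.bimodule cone b (xig M₂ g) hcC hbC (isElt_xig M₂ g)
  have h4 : lAct M₁ (a ∘ f) (rAct (W (xig M₂ g)) (cone ∘ f))
      = lAct M₁ (cone ∘ f) (rAct (W (xig M₂ g)) (b ∘ f)) := by
    rw [← h2, ← h3, E1]
  have h5 := congrFun (congrFun h4 e) x
  simp only [lAct, rAct, Function.comp, hcone, ha, hb, one_mul, mul_one] at h5
  have hbfx : b₀ (f x) = 0 := by
    rw [← hb₀eq hfx]
    simp [hp]
  rw [hbfx] at h5
  simp only [Complex.ofReal_zero, mul_zero] at h5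
  rcases mul_eq_zero.mp h5 with h6 | h6
  · rw [Complex.ofReal_eq_zero] at h6
    exact dist_eq_zero.mp h6
  · exact absurd h6 hu

end MWAux

end MWAuxSect2
section MWAuxSect3

open MWGraph MWAux Matrix

variable {V E : Type*} [Fintype E] {G : DirGraph V E}
variable {X₁ X₂ : Type*} [MetricSpace X₁] [MetricSpace X₂]
  {M₁ : MWGraph G X₁} {M₂ : MWGraph G X₂} {f : X₁ → X₂}
  {W : (E → X₂ → ℂ) → (E → X₁ → ℂ)}

namespace MWAux

lemma exists_perm (hW : CorrIso M₁ M₂ f W) {x₀ : X₁} {v₀ w₀ : V}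
    (hx₀ : x₀ ∈ M₁.T v₀) (hfx₀ : f x₀ ∈ M₂.T w₀) :
    ∃ σ : Equiv.Perm E, ∀ g : E, G.r g = w₀ →
      G.r (σ g) = v₀ ∧ W (xig M₂ g) (σ g) x₀ ≠ 0 := by
  classical
  have hx₀K : x₀ ∈ M₁.KK := Set.mem_iUnion.mpr ⟨v₀, hx₀⟩
  set u : E → E → ℂ := fun e gg => W (xig M₂ gg) e x₀ with hu
  have hcol : ∀ g h : E, ∑ e, (starRingEnd ℂ) (u e g) * u e h
      = if g = h ∧ f x₀ ∈ M₂.T (G.r g) then 1 else 0 := by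
    intro g h
    have h1 := hW.inner_eq (xig M₂ g) (xig M₂ h) (isElt_xig M₂ g) (isElt_xig M₂ h) x₀ hx₀K
    rw [innerProd_xig] at h1
    exact h1
  have hrow0 : ∀ e g : E, G.r e ≠ v₀ → u e g = 0 := by
    intro e g hne
    have hnot : x₀ ∉ M₁.T (G.r e) := fun h => hne ((mem_T_iff M₁ hx₀ _).mp h)
    exact (hW.maps _ (isElt_xig M₂ g)).2 e x₀ hnot
  have hcol0 : ∀ e g : E, G.r g ≠ w₀ → u e g = 0 := by
    intro e g hne
    by_contra h
    exact hne ((mem_T_iff M₂ hfx₀ _).mp (fx_mem hW hx₀K h))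
  have hZex : ∀ e : E, ∃ ζ, IsElt M₂ ζ ∧ W ζ = xig M₁ e :=
    fun e => hW.surjective (xig M₁ e) (isElt_xig M₁ e)
  choose Z hZelt hZW using hZex
  have hZorth : ∀ e e' : E, ∑ gg, (starRingEnd ℂ) (Z e gg (f x₀)) * Z e' gg (f x₀)
      = if e = e' ∧ x₀ ∈ M₁.T (G.r e) then 1 else 0 := by
    intro e e'
    have h1 := hW.inner_eq (Z e) (Z e') (hZelt e) (hZelt e') x₀ hx₀K
    rw [hZW, hZW, innerProd_xig] at h1
    rw [h1]
    rfl
  have hZ0 : ∀ e g : E, G.r g ≠ w₀ → Z e g (f x₀) = 0 := by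
    intro e g hne
    exact (hZelt e).2 g (f x₀) fun h => hne ((mem_T_iff M₂ hfx₀ _).mp h)
  set A : Matrix {e : E // G.r e = v₀} {g : E // G.r g = w₀} ℂ :=
    fun e g => u e.1 g.1 with hA
  set B : Matrix {e : E // G.r e = v₀} {g : E // G.r g = w₀} ℂ :=
    fun e g => Z e.1 g.1 (f x₀) with hB
  have hAA : Aᴴ * A = 1 := by
    ext g h
    rw [Matrix.mul_apply, Matrix.one_apply]
    have hv : ∑ e : {e : E // G.r e = v₀}, (starRingEnd ℂ) (u e.1 g.1) * u e.1 h.1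
        = ∑ e : E, (starRingEnd ℂ) (u e g.1) * u e h.1 :=
      sum_subtype_vanish (fun e => (starRingEnd ℂ) (u e g.1) * u e h.1)
        (fun e he => by simp only [hrow0 e g.1 he, map_zero, zero_mul])
    have hmem : f x₀ ∈ M₂.T (G.r g.1) := by rw [g.2]; exact hfx₀
    calc ∑ e : {e : E // G.r e = v₀}, Aᴴ g e * A e h
        = ∑ e : {e : E // G.r e = v₀}, (starRingEnd ℂ) (u e.1 g.1) * u e.1 h.1 := rfl
      _ = ∑ e : E, (starRingEnd ℂ) (u e g.1) * u e h.1 := hv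
      _ = if g = h then 1 else 0 := by
          rw [hcol]
          by_cases hgh : g = h
          · subst hgh
            simp [hmem]
          · have hne : g.1 ≠ h.1 := fun hc => hgh (Subtype.ext hc)
            simp [hgh, hne]
  have hBB : B * Bᴴ = 1 := by
    ext e e'
    rw [Matrix.mul_apply, Matrix.one_apply]
    have hfull : ∑ gg : E, Z e.1 gg (f x₀) * (starRingEnd ℂ) (Z e'.1 gg (f x₀))
        = if e.1 = e'.1 ∧ x₀ ∈ M₁.T (G.r e.1) then 1 else 0 := by
      have h1 : ∑ gg : E, Z e.1 gg (f x₀) * (starRingEnd ℂ) (Z e'.1 gg (f x₀))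
          = (starRingEnd ℂ)
              (∑ gg : E, (starRingEnd ℂ) (Z e.1 gg (f x₀)) * Z e'.1 gg (f x₀)) := by
        rw [map_sum]
        refine Finset.sum_congr rfl fun gg _ => ?_
        rw [_root_.map_mul, Complex.conj_conj]
      rw [h1, hZorth]
      split <;> simp
    have hv : ∑ gg : {g : E // G.r g = w₀}, Z e.1 gg.1 (f x₀)
          * (starRingEnd ℂ) (Z e'.1 gg.1 (f x₀))
        = ∑ gg : E, Z e.1 gg (f x₀) * (starRingEnd ℂ) (Z e'.1 gg (f x₀)) :=
      sum_subtype_vanish (fun gg => Z e.1 gg (f x₀) * (starRingEnd ℂ) (Z e'.1 gg (f x₀)))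
        (fun gg hg => by simp only [hZ0 e.1 gg hg, zero_mul])
    have hmem : x₀ ∈ M₁.T (G.r e.1) := by rw [e.2]; exact hx₀
    calc ∑ gg : {g : E // G.r g = w₀}, B e gg * Bᴴ gg e'
        = ∑ gg : {g : E // G.r g = w₀}, Z e.1 gg.1 (f x₀)
            * (starRingEnd ℂ) (Z e'.1 gg.1 (f x₀)) := rfl
      _ = ∑ gg : E, Z e.1 gg (f x₀) * (starRingEnd ℂ) (Z e'.1 gg (f x₀)) := hv
      _ = if e = e' then 1 else 0 := by
          rw [hfull]
          by_cases hee : e = e'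
          · subst hee
            simp [hmem]
          · have hne : e.1 ≠ e'.1 := fun hc => hee (Subtype.ext hc)
            simp [hee, hne]
  have hcards : Fintype.card {g : E // G.r g = w₀} = Fintype.card {e : E // G.r e = v₀} := by
    have h1 : Fintype.card {e : E // G.r e = v₀} ≤ Fintype.card {g : E // G.r g = w₀} := by
      calc Fintype.card {e : E // G.r e = v₀}
          = (1 : Matrix {e : E // G.r e = v₀} {e : E // G.r e = v₀} ℂ).rank :=
            Matrix.rank_one.symm
        _ = (B * Bᴴ).rank := by rw [hBB]
        _ ≤ B.rank := Matrix.rank_mul_le_left _ _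
        _ ≤ Fintype.card {g : E // G.r g = w₀} := Matrix.rank_le_card_width _
    have h2 : Fintype.card {g : E // G.r g = w₀} ≤ Fintype.card {e : E // G.r e = v₀} := by
      calc Fintype.card {g : E // G.r g = w₀}
          = (1 : Matrix {g : E // G.r g = w₀} {g : E // G.r g = w₀} ℂ).rank :=
            Matrix.rank_one.symm
        _ = (Aᴴ * A).rank := by rw [hAA]
        _ ≤ Aᴴ.rank := Matrix.rank_mul_le_left _ _
        _ ≤ Fintype.card {e : E // G.r e = v₀} := Matrix.rank_le_card_width _
    exact le_antisymm h2 h1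
  let ee : {g : E // G.r g = w₀} ≃ {e : E // G.r e = v₀} := Fintype.equivOfCardEq hcards
  set M' : Matrix {g : E // G.r g = w₀} {g : E // G.r g = w₀} ℂ :=
    fun i j => A (ee i) j with hM'
  have hM'U : M'ᴴ * M' = 1 := by
    ext g h
    have key : (M'ᴴ * M') g h = (Aᴴ * A) g h := by
      rw [Matrix.mul_apply, Matrix.mul_apply,
        ← Equiv.sum_comp ee (fun e => Aᴴ g e * A e h)]
      rfl
    rw [key, hAA]
  have hdet : M'.det ≠ 0 := by
    intro h0
    have hd := congrArg Matrix.det hM'U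
    rw [Matrix.det_mul, h0, mul_zero, Matrix.det_one] at hd
    exact zero_ne_one hd
  have hperm : ∃ σ : Equiv.Perm {g : E // G.r g = w₀}, ∀ i, M' (σ i) i ≠ 0 := by
    by_contra hcon
    push_neg at hcon
    apply hdet
    rw [Matrix.det_apply]
    refine Finset.sum_eq_zero fun σ _ => ?_
    obtain ⟨i, hi⟩ := hcon σ
    rw [Finset.prod_eq_zero (f := fun j => M' (σ j) j) (Finset.mem_univ i) hi, smul_zero]
  obtain ⟨σ0, hσ0⟩ := hperm
  let τ : {g : E // G.r g = w₀} ≃ {e : E // G.r e = v₀} := σ0.trans ee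
  let κ : {g : E // ¬ G.r g = w₀} ≃ {e : E // ¬ G.r e = v₀} := Fintype.equivOfCardEq (by
    rw [Fintype.card_subtype_compl, Fintype.card_subtype_compl, hcards])
  refine ⟨Equiv.subtypeCongr τ κ, ?_⟩
  intro g hg
  have happ : Equiv.subtypeCongr τ κ g = (τ ⟨g, hg⟩ : E) := by
    simp [Equiv.subtypeCongr, hg]
  rw [happ]
  exact ⟨(τ ⟨g, hg⟩).2, hσ0 ⟨g, hg⟩⟩

end MWAux

end MWAuxSect3
section MWAuxSect4

open MWGraph MWAux

variable {V E : Type*} [Fintype E] {G : DirGraph V E}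
variable {X₁ X₂ : Type*} [MetricSpace X₁] [MetricSpace X₂]
  {M₁ : MWGraph G X₁} {M₂ : MWGraph G X₂} {f : X₁ → X₂}
  {W : (E → X₂ → ℂ) → (E → X₁ → ℂ)}

namespace MWAux

lemma point_lemma [Fintype V] (hW : CorrIso M₁ M₂ f W)
    (hf : Set.MapsTo f M₁.KK M₂.KK) (hfc : ContinuousOn f M₁.KK)
    {x₀ : X₁} (hx₀ : x₀ ∈ M₁.KK) :
    ∃ O : Set X₁, IsOpen O ∧ x₀ ∈ O ∧ ∃ σ : Equiv.Perm E,
      ∀ e : E, ∀ x ∈ O ∩ M₁.KK, f x ∈ M₂.T (G.r e) →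
        x ∈ M₁.T (G.r (σ e)) ∧ f (M₁.φ (σ e) x) = M₂.φ e (f x) := by
  classical
  obtain ⟨v₀, hx₀v⟩ := Set.mem_iUnion.mp hx₀
  obtain ⟨w₀, hfx₀w⟩ := Set.mem_iUnion.mp (hf hx₀)
  obtain ⟨σ, hσ⟩ := exists_perm hW hx₀v hfx₀w
  set C₁ : Set X₁ := ⋃ v ∈ {v : V | v ≠ v₀}, M₁.T v with hC₁
  have hC₁closed : IsClosed C₁ :=
    (Set.toFinite _).isClosed_biUnion fun v _ => (M₁.T_compact v).isClosed
  have hx₀C₁ : x₀ ∉ C₁ := by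
    intro hmem
    rw [hC₁, Set.mem_iUnion₂] at hmem
    obtain ⟨v, hv, hxv⟩ := hmem
    exact hv ((mem_T_iff M₁ hx₀v v).mp hxv)
  have hT1 : ∀ x, x ∈ C₁ᶜ → x ∈ M₁.KK → x ∈ M₁.T v₀ := by
    intro x hxc hxK
    obtain ⟨v, hxv⟩ := Set.mem_iUnion.mp hxK
    rcases eq_or_ne v v₀ with rfl | hne
    · exact hxv
    · exact absurd (Set.mem_biUnion (show v ∈ {v : V | v ≠ v₀} from hne) hxv) hxc
  set C₂ : Set X₂ := ⋃ w ∈ {w : V | w ≠ w₀}, M₂.T w with hC₂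
  have hC₂closed : IsClosed C₂ :=
    (Set.toFinite _).isClosed_biUnion fun w _ => (M₂.T_compact w).isClosed
  have hfx₀C₂ : f x₀ ∉ C₂ := by
    intro hmem
    rw [hC₂, Set.mem_iUnion₂] at hmem
    obtain ⟨w, hw, hxw⟩ := hmem
    exact hw ((mem_T_iff M₂ hfx₀w w).mp hxw)
  have hD : C₂ᶜ ∈ nhds (f x₀) := hC₂closed.isOpen_compl.mem_nhds hfx₀C₂
  have h2 : f ⁻¹' C₂ᶜ ∈ nhdsWithin x₀ M₁.KK :=
    (hfc x₀ hx₀).preimage_mem_nhdsWithin hD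
  obtain ⟨O₂, hO₂open, hx₀O₂, hO₂sub⟩ := mem_nhdsWithin.mp h2
  have hT2 : ∀ x, x ∈ O₂ → x ∈ M₁.KK → f x ∈ M₂.T w₀ := by
    intro x hxO hxK
    have hfxc : f x ∈ C₂ᶜ := hO₂sub ⟨hxO, hxK⟩
    obtain ⟨w, hw⟩ := Set.mem_iUnion.mp (hf hxK)
    rcases eq_or_ne w w₀ with rfl | hne
    · exact hw
    · exact absurd (Set.mem_biUnion (show w ∈ {w : V | w ≠ w₀} from hne) hw) hfxc
  have hcont : ∀ i : {g : E // G.r g = w₀}, ∃ Og : Set X₁, IsOpen Og ∧ x₀ ∈ Og ∧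
      ∀ x, x ∈ Og → x ∈ M₁.T (G.r (σ i.1)) → W (xig M₂ i.1) (σ i.1) x ≠ 0 := by
    intro i
    have hrq := (hσ i.1 i.2).1
    have hx₀T : x₀ ∈ M₁.T (G.r (σ i.1)) := by rw [hrq]; exact hx₀v
    have hcw : ContinuousWithinAt (W (xig M₂ i.1) (σ i.1)) (M₁.T (G.r (σ i.1))) x₀ :=
      ((hW.maps _ (isElt_xig M₂ i.1)).1 (σ i.1)) x₀ hx₀T
    have hne := (hσ i.1 i.2).2
    have hmem0 : {(0 : ℂ)}ᶜ ∈ nhds (W (xig M₂ i.1) (σ i.1) x₀) :=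
      isOpen_compl_singleton.mem_nhds (by simpa using hne)
    obtain ⟨Og, hopen, hmem, hsub⟩ :=
      mem_nhdsWithin.mp (hcw.preimage_mem_nhdsWithin hmem0)
    exact ⟨Og, hopen, hmem, fun x hx hxT => by simpa using hsub ⟨hx, hxT⟩⟩
  choose Og hOgopen hOgmem hOgne using hcont
  refine ⟨C₁ᶜ ∩ O₂ ∩ ⋂ i, Og i, ?_, ?_, σ, ?_⟩
  · exact (hC₁closed.isOpen_compl.inter hO₂open).inter (isOpen_iInter_of_finite hOgopen)
  · exact ⟨⟨hx₀C₁, hx₀O₂⟩, Set.mem_iInter.mpr hOgmem⟩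
  · rintro e x ⟨⟨⟨hxc1, hxO2⟩, hxO3⟩, hxK⟩ hfxe
    have hxT : x ∈ M₁.T v₀ := hT1 x hxc1 hxK
    have hfxT : f x ∈ M₂.T w₀ := hT2 x hxO2 hxK
    have hre : G.r e = w₀ := (mem_T_iff M₂ hfxT (G.r e)).mp hfxe
    have hxTσ : x ∈ M₁.T (G.r (σ e)) := by rw [(hσ e hre).1]; exact hxT
    have hune : W (xig M₂ e) (σ e) x ≠ 0 :=
      hOgne ⟨e, hre⟩ x (Set.mem_iInter.mp hxO3 ⟨e, hre⟩) hxTσ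
    obtain ⟨h1, h2', h3⟩ := conj_eq hW hxK hune
    exact ⟨hxTσ, h3⟩

end MWAux

end MWAuxSect4

/-- If `W : X₂ → X₁` is a correspondence isomorphism over a
homeomorphism `f : K¹ → K²`, then there exist a finite open cover `U₁, …, U_m`
of `K¹` and permutations `σ₁, …, σ_m` of `E` such that for all `j`, `e ∈ E` and
`x ∈ U_j` with `f x ∈ K² (r e)` one has `x ∈ K¹ (r (σ_j e))` and
`f (φ¹ (σ_j e) x) = φ² e (f x)`. -/
theorem MWGraph.local_conjugacy_of_corrIso {V E : Type*} [Fintype V] [Fintype E]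
    {X₁ X₂ : Type*} [MetricSpace X₁] [MetricSpace X₂] {G : DirGraph V E}
    (M₁ : MWGraph G X₁) (M₂ : MWGraph G X₂)
    (hM₁ : M₁.SelfInvariant) (hM₂ : M₂.SelfInvariant)
    (f : X₁ → X₂) (g : X₂ → X₁)
    (hf : Set.MapsTo f M₁.KK M₂.KK) (hg : Set.MapsTo g M₂.KK M₁.KK)
    (hfc : ContinuousOn f M₁.KK) (hgc : ContinuousOn g M₂.KK)
    (hgf : ∀ x ∈ M₁.KK, g (f x) = x) (hfg : ∀ y ∈ M₂.KK, f (g y) = y)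
    (W : (E → X₂ → ℂ) → (E → X₁ → ℂ)) (hW : MWGraph.CorrIso M₁ M₂ f W) :
    ∃ (m : ℕ) (U : Fin m → Set X₁) (σ : Fin m → Equiv.Perm E),
      (∀ j, ∃ O : Set X₁, IsOpen O ∧ U j = O ∩ M₁.KK) ∧
      M₁.KK ⊆ ⋃ j, U j ∧
      ∀ (j : Fin m) (e : E), ∀ x ∈ U j, f x ∈ M₂.T (G.r e) →
        x ∈ M₁.T (G.r (σ j e)) ∧ f (M₁.φ (σ j e) x) = M₂.φ e (f x) := by
  classical
  have hK : IsCompact M₁.KK := isCompact_iUnion fun v => M₁.T_compact v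
  have hpt : ∀ x : M₁.KK, ∃ O : Set X₁, IsOpen O ∧ (x : X₁) ∈ O ∧ ∃ σ : Equiv.Perm E,
      ∀ e : E, ∀ y ∈ O ∩ M₁.KK, f y ∈ M₂.T (G.r e) →
        y ∈ M₁.T (G.r (σ e)) ∧ f (M₁.φ (σ e) y) = M₂.φ e (f y) :=
    fun x => MWAux.point_lemma hW hf hfc x.2
  choose O hOopen hOmem hrest using hpt
  choose σsel hσsel using hrest
  obtain ⟨t, ht⟩ := hK.elim_finite_subcover O hOopen
    (fun x hx => Set.mem_iUnion.mpr ⟨⟨x, hx⟩, hOmem ⟨x, hx⟩⟩)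
  refine ⟨t.card, fun j => O (t.equivFin.symm j).1 ∩ M₁.KK,
    fun j => σsel (t.equivFin.symm j).1, ?_, ?_, ?_⟩
  · exact fun j => ⟨O _, hOopen _, rfl⟩
  · intro x hx
    obtain ⟨i, hit, hxO⟩ := Set.mem_iUnion₂.mp (ht hx)
    refine Set.mem_iUnion.mpr ⟨t.equivFin ⟨i, hit⟩, ?_⟩
    simp only [Equiv.symm_apply_apply]
    exact ⟨hxO, hx⟩
  · intro j e x hx hfx
    exact hσsel (t.equivFin.symm j).1 e x hx hfx
end

section
/- For i = 1,2 let two Mauldin–Williams graphs over the same underlying graph G = (V,E,r,s) coincide with their invariant lists, with invariant sets K¹, K², and suppose the first graph is totally disconnected. Suppose there exist a homeomorphism f : K¹ → K², a finite open cover U₁,…,U_m of K¹, and permutations σ₁,…,σ_m of E such that for every j, every e ∈ E, and every x ∈ U_j with f(x) ∈ K²_{r(e)}: x ∈ K¹_{r(σ_j(e))} and f(φ¹_{σ_j(e)}(x)) = φ²_e(f(x)). Then there exists a continuous map h : K¹ → Perm(E) (the finite permutation group of E with the discrete topology) such that for every x ∈ K¹ and every e ∈ E with f(x) ∈ K²_{r(e)}: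 x ∈ K¹_{r(h(x)(e))} and f(φ¹_{h(x)(e)}(x)) = φ²_e(f(x)). -/
/-- Suppose the first Mauldin–Williams graph is totally
disconnected and there are a homeomorphism `f : K¹ → K²`, a finite open cover
`U₁, …, U_m` of `K¹` and permutations `σ₁, …, σ_m` of `E` realizing a local
conjugacy.  Then there is a continuous (i.e. locally constant on `K¹`) map
`h : K¹ → Perm E` with `x ∈ K¹ (r (h x e))` and
`f (φ¹ (h x e) x) = φ² e (f x)` whenever `f x ∈ K² (r e)`. -/
theorem MWGraph.continuous_permutation_map {V E : Type*} [Fintype V] [Fintype E]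
    {X₁ X₂ : Type*} [MetricSpace X₁] [MetricSpace X₂] {G : DirGraph V E}
    (M₁ : MWGraph G X₁) (M₂ : MWGraph G X₂)
    (hM₁ : M₁.SelfInvariant) (hM₂ : M₂.SelfInvariant)
    (htd₁ : M₁.TotallyDisconnected)
    (f : X₁ → X₂) (g : X₂ → X₁)
    (hf : Set.MapsTo f M₁.KK M₂.KK) (hg : Set.MapsTo g M₂.KK M₁.KK)
    (hfc : ContinuousOn f M₁.KK) (hgc : ContinuousOn g M₂.KK)
    (hgf : ∀ x ∈ M₁.KK, g (f x) = x) (hfg : ∀ y ∈ M₂.KK, f (g y) = y)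
    (m : ℕ) (U : Fin m → Set X₁)
    (hUopen : ∀ j, ∃ O : Set X₁, IsOpen O ∧ U j = O ∩ M₁.KK)
    (hUcover : M₁.KK ⊆ ⋃ j, U j)
    (σ : Fin m → Equiv.Perm E)
    (hσ : ∀ (j : Fin m) (e : E), ∀ x ∈ U j, f x ∈ M₂.T (G.r e) →
      x ∈ M₁.T (G.r (σ j e)) ∧ f (M₁.φ (σ j e) x) = M₂.φ e (f x)) :
    ∃ h : X₁ → Equiv.Perm E,
      (∀ x ∈ M₁.KK, ∃ O : Set X₁, IsOpen O ∧ x ∈ O ∧ ∀ y ∈ O ∩ M₁.KK, h y = h x) ∧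
      ∀ x ∈ M₁.KK, ∀ e : E, f x ∈ M₂.T (G.r e) →
        x ∈ M₁.T (G.r (h x e)) ∧ f (M₁.φ (h x e) x) = M₂.φ e (f x) := by
  classical
  have hKsub : ∀ j, U j ⊆ M₁.KK := fun j => by
    obtain ⟨O, _, hU⟩ := hUopen j; rw [hU]; exact Set.inter_subset_right
  -- uniqueness of the conjugating edge
  have uniq : ∀ z ∈ M₁.KK, ∀ e e' e'' : E,
      z ∈ M₁.T (G.r e') → z ∈ M₁.T (G.r e'') →
      f (M₁.φ e' z) = M₂.φ e (f z) → f (M₁.φ e'' z) = M₂.φ e (f z) → e' = e'' := by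
    intro z _ e e' e'' hz' hz'' h1 h2
    have hm' : M₁.φ e' z ∈ M₁.T (G.s e') := M₁.maps_to e' hz'
    have hm'' : M₁.φ e'' z ∈ M₁.T (G.s e'') := M₁.maps_to e'' hz''
    have hφeq : M₁.φ e' z = M₁.φ e'' z := by
      have h3 : f (M₁.φ e' z) = f (M₁.φ e'' z) := h1.trans h2.symm
      have k' : M₁.φ e' z ∈ M₁.KK := Set.mem_iUnion.2 ⟨_, hm'⟩
      have k'' : M₁.φ e'' z ∈ M₁.KK := Set.mem_iUnion.2 ⟨_, hm''⟩
      calc M₁.φ e' z = g (f (M₁.φ e' z)) := (hgf _ k').symm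
        _ = g (f (M₁.φ e'' z)) := by rw [h3]
        _ = M₁.φ e'' z := hgf _ k''
    have hs : G.s e' = G.s e'' := by
      by_contra hne
      exact Set.disjoint_left.1 (M₁.T_disjoint _ _ hne) hm' (hφeq ▸ hm'')
    by_contra hne
    exact Set.disjoint_left.1 (htd₁ e' e'' hne hs) ⟨z, hz', rfl⟩ ⟨z, hz'', hφeq.symm⟩
  set Good : Fin m → X₁ → Prop := fun j z =>
    ∀ e, f z ∈ M₂.T (G.r e) →
      z ∈ M₁.T (G.r (σ j e)) ∧ f (M₁.φ (σ j e) z) = M₂.φ e (f z) with hGood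
  have goodU : ∀ j, ∀ z ∈ U j, Good j z := fun j z hz e he => hσ j e z hz he
  set S : X₁ → Finset (Fin m) := fun z => Finset.univ.filter (fun j => Good j z) with hS
  have hSne : ∀ x ∈ M₁.KK, (S x).Nonempty := by
    intro x hx
    obtain ⟨j, hj⟩ := Set.mem_iUnion.1 (hUcover hx)
    exact ⟨j, Finset.mem_filter.2 ⟨Finset.mem_univ _, goodU j x hj⟩⟩
  refine ⟨fun z => if hz : (S z).Nonempty then σ ((S z).min' hz) else 1, ?_, ?_⟩
  · intro x hx
    obtain ⟨v, hv⟩ := Set.mem_iUnion.1 (hf hx)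
    obtain ⟨j₀, hj₀⟩ := Set.mem_iUnion.1 (hUcover hx)
    obtain ⟨O₁, hO₁open, hU₁⟩ := hUopen j₀
    have hxO₁ : x ∈ O₁ := by rw [hU₁] at hj₀; exact hj₀.1
    set A : Set X₂ := ⋃ w ∈ {w : V | w ≠ v}, M₂.T w with hA
    have hAclosed : IsClosed A := by
      apply Set.Finite.isClosed_biUnion (Set.toFinite _)
      intro w _; exact (M₂.T_compact w).isClosed
    have hfxA : f x ∈ Aᶜ := by
      intro hmem
      obtain ⟨w, hw, hmem⟩ := Set.mem_iUnion₂.1 hmem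
      exact Set.disjoint_left.1 (M₂.T_disjoint w v hw) hmem hv
    have hnhds := (hfc x hx) (hAclosed.isOpen_compl.mem_nhds hfxA)
    obtain ⟨O₂, hO₂open, hxO₂, hsub⟩ := mem_nhdsWithin.1 hnhds
    refine ⟨O₁ ∩ O₂, hO₁open.inter hO₂open, ⟨hxO₁, hxO₂⟩, ?_⟩
    have hmapv : ∀ y ∈ O₂ ∩ M₁.KK, f y ∈ M₂.T v := by
      intro y hy
      obtain ⟨w, hw⟩ := Set.mem_iUnion.1 (hf hy.2)
      have hnA : f y ∉ A := hsub ⟨hy.1, hy.2⟩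
      by_cases hwv : w = v
      · rwa [hwv] at hw
      · exact absurd (Set.mem_iUnion₂.2 ⟨w, hwv, hw⟩) hnA
    have char : ∀ z, z ∈ U j₀ → f z ∈ M₂.T v → ∀ j,
        (Good j z ↔ ∀ e, G.r e = v → σ j e = σ j₀ e) := by
      intro z hzU hzv j
      have hzK := hKsub j₀ hzU
      constructor
      · intro hgood e herv
        have he : f z ∈ M₂.T (G.r e) := by rw [herv]; exact hzv
        obtain ⟨h1, h2⟩ := hgood e he
        obtain ⟨h1', h2'⟩ := goodU j₀ z hzU e he
        exact uniq z hzK e _ _ h1 h1' h2 h2'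
      · intro hc e he
        have herv : G.r e = v := by
          by_contra hne
          exact Set.disjoint_left.1 (M₂.T_disjoint _ _ hne) he hzv
        rw [hc e herv]; exact goodU j₀ z hzU e he
    intro y hy
    have hyK : y ∈ M₁.KK := hy.2
    have hyU : y ∈ U j₀ := by rw [hU₁]; exact ⟨hy.1.1, hyK⟩
    have hyv : f y ∈ M₂.T v := hmapv y ⟨hy.1.2, hyK⟩
    have hSeq : S y = S x := by
      ext j
      simp only [hS, Finset.mem_filter, Finset.mem_univ, true_and]
      rw [char y hyU hyv j, char x hj₀ hv j]
    have h1 := hSne x hx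
    have h2 := hSne y hyK
    simp only [dif_pos h1, dif_pos h2]
    have hmin : (S y).min' h2 = (S x).min' h1 := by
      apply le_antisymm
      · apply Finset.min'_le
        rw [hSeq]; exact Finset.min'_mem _ h1
      · apply Finset.min'_le
        rw [← hSeq]; exact Finset.min'_mem _ h2
    rw [hmin]
  · intro x hx e he
    have h1 := hSne x hx
    simp only [dif_pos h1]
    have hmin : (S x).min' h1 ∈ S x := Finset.min'_mem _ _
    exact (Finset.mem_filter.1 hmin).2 e he
end

section
/- For i = 1,2 let two Mauldin–Williams graphs over the same underlying graph G = (V,E,r,s) coincide with their invariant lists, with invariant sets K¹, K², and suppose the first graph is totally disconnected. Suppose there exist a bijection f : K¹ → K² and a map h : K¹ → Perm(E) such that for every x ∈ K¹ and every e ∈ E with f(x) ∈ K²_{r(e)}: x ∈ K¹_{r(h(x)(e))} and f(φ¹_{h(x)(e)}(x)) = φ²_e(f(x)). Then the second Mauldin–Williams graph is also totally disconnected. -/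
/-- Suppose the first Mauldin–Williams graph is totally
disconnected, `f : K¹ → K²` is a bijection, and `h : K¹ → Perm E` satisfies:
for every `x ∈ K¹` and `e ∈ E` with `f x ∈ K² (r e)`, `x ∈ K¹ (r (h x e))` and
`f (φ¹ (h x e) x) = φ² e (f x)`.  Then the second Mauldin–Williams graph is
also totally disconnected. -/
theorem MWGraph.totallyDisconnected_of_conjugacy {V E : Type*} [Fintype V] [Fintype E]
    {X₁ X₂ : Type*} [MetricSpace X₁] [MetricSpace X₂] {G : DirGraph V E}
    (M₁ : MWGraph G X₁) (M₂ : MWGraph G X₂)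
    (hM₁ : M₁.SelfInvariant) (hM₂ : M₂.SelfInvariant)
    (htd₁ : M₁.TotallyDisconnected)
    (f : X₁ → X₂)
    (hf : Set.MapsTo f M₁.KK M₂.KK) (hfinj : Set.InjOn f M₁.KK)
    (hfsurj : f '' M₁.KK = M₂.KK)
    (h : X₁ → Equiv.Perm E)
    (hh : ∀ x ∈ M₁.KK, ∀ e : E, f x ∈ M₂.T (G.r e) →
      x ∈ M₁.T (G.r (h x e)) ∧ f (M₁.φ (h x e) x) = M₂.φ e (f x)) :
    M₂.TotallyDisconnected := by
  intro e g hne hsg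
  rw [Set.disjoint_left]
  rintro z ⟨p, hp, rfl⟩ ⟨q, hq, hz⟩
  have hpK : p ∈ M₂.KK := Set.mem_iUnion.2 ⟨_, hp⟩
  have hqK : q ∈ M₂.KK := Set.mem_iUnion.2 ⟨_, hq⟩
  rw [← hfsurj] at hpK hqK
  obtain ⟨x, hxK, rfl⟩ := hpK
  obtain ⟨x', hx'K, rfl⟩ := hqK
  obtain ⟨hx₁, hfe⟩ := hh x hxK e hp
  obtain ⟨hx₂, hfg⟩ := hh x' hx'K g hq
  set e₁ := h x e with he₁
  set e₂ := h x' g with he₂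
  have hw₁ : M₁.φ e₁ x ∈ M₁.T (G.s e₁) := M₁.maps_to e₁ hx₁
  have hw₂ : M₁.φ e₂ x' ∈ M₁.T (G.s e₂) := M₁.maps_to e₂ hx₂
  have hw₁K : M₁.φ e₁ x ∈ M₁.KK := Set.mem_iUnion.2 ⟨_, hw₁⟩
  have hw₂K : M₁.φ e₂ x' ∈ M₁.KK := Set.mem_iUnion.2 ⟨_, hw₂⟩
  have hweq : M₁.φ e₁ x = M₁.φ e₂ x' := by
    apply hfinj hw₁K hw₂K
    rw [hfe, hfg, hz]
  have hs : G.s e₁ = G.s e₂ := by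
    by_contra h'
    exact (M₁.T_disjoint _ _ h').le_bot ⟨hw₁, hweq ▸ hw₂⟩
  have hee : e₁ = e₂ := by
    by_contra h'
    exact ((htd₁ e₁ e₂ h' hs).le_bot
      ⟨⟨x, hx₁, rfl⟩, hweq ▸ ⟨x', hx₂, rfl⟩⟩)
  have hxx : x = x' := by
    have hx₂' : x' ∈ M₁.T (G.r e₁) := hee ▸ hx₂
    have hlow := M₁.lower e₁ x hx₁ x' hx₂'
    rw [← hee] at hweq
    rw [hweq, dist_self] at hlow
    have : dist x x' = 0 := le_antisymm (by nlinarith [M₁.c₁_pos]) dist_nonneg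
    exact dist_eq_zero.mp this
  apply hne
  apply (h x).injective
  rw [he₁] at hee
  rw [hee, he₂, hxx]
end

section
/- Let a Mauldin–Williams graph have invariant list (K_v)_{v∈V} with invariant set K, and assume K has no isolated points. Then for every nonempty open subset U of K and every integer n ≥ 1, there exists a point t₀ ∈ U such that for every path α of length k with 1 ≤ k ≤ n and t₀ ∈ K_{r(α_k)}, one has φ_α(t₀) ≠ t₀ (i.e., t₀ is not a fixed point of any composition φ_α of at most n edge maps). -/
namespace MWGraph

variable {V E : Type*} {G : DirGraph V E} {X : Type*} [MetricSpace X]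

lemma c_pos_s14 (M : MWGraph G X) : 0 < M.c := lt_of_lt_of_le M.c₁_pos M.c₁_le_c

lemma step_mem (M : MWGraph G X) {K : V → Set X} (hK : M.IsInvariantList K)
    (e : E) {x : X} (hx : x ∈ K (G.r e)) : M.φ e x ∈ K (G.s e) := by
  rw [hK.2.2.2 (G.s e)]
  exact Set.mem_biUnion (by simp) ⟨x, hx, rfl⟩

lemma key (M : MWGraph G X) {K : V → Set X} (hK : M.IsInvariantList K) :
    ∀ (l : List E) (hl : l ≠ []), IsPath G l →
    ∀ t ∈ K (G.r (l.getLast hl)), ∀ t' ∈ K (G.r (l.getLast hl)),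
      M.pathMap l t ∈ K (G.s (l.head hl)) ∧
      dist (M.pathMap l t) (M.pathMap l t') ≤ M.c ^ l.length * dist t t' := by
  intro l
  induction l with
  | nil => intro hl; exact absurd rfl hl
  | cons e l' ih =>
    intro hl hp t ht t' ht'
    cases l' with
    | nil =>
      simp only [List.getLast_singleton] at ht ht'
      refine ⟨M.step_mem hK e ht, ?_⟩
      simpa [pathMap] using M.upper e t (hK.1 _ ht) t' (hK.1 _ ht')
    | cons f l'' =>
      have hne : (f :: l'') ≠ [] := by simp
      have hlast : (e :: f :: l'').getLast hl = (f :: l'').getLast hne :=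
        List.getLast_cons hne
      rw [hlast] at ht ht'
      obtain ⟨hef, hp'⟩ := List.isChain_cons_cons.mp hp
      obtain ⟨hmem, hdist⟩ := ih hne hp' t ht t' ht'
      have hmem1 : M.pathMap (f :: l'') t ∈ K (G.r e) := by
        rw [hef]; simpa using hmem
      have hmem2 : M.pathMap (f :: l'') t' ∈ K (G.r e) := by
        rw [hef]; simpa using (ih hne hp' t' ht' t' ht').1
      refine ⟨M.step_mem hK e hmem1, ?_⟩
      have h1 := M.upper e _ (hK.1 _ hmem1) _ (hK.1 _ hmem2)
      calc dist (M.pathMap (e :: f :: l'') t) (M.pathMap (e :: f :: l'') t')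
          ≤ M.c * dist (M.pathMap (f :: l'') t) (M.pathMap (f :: l'') t') := h1
        _ ≤ M.c * (M.c ^ (f :: l'').length * dist t t') :=
            mul_le_mul_of_nonneg_left hdist M.c_pos_s14.le
        _ = M.c ^ (e :: f :: l'').length * dist t t' := by
            simp only [List.length_cons, pow_succ]; ring

lemma fix_subsingleton (M : MWGraph G X) {K : V → Set X} (hK : M.IsInvariantList K)
    (l : List E) :
    {t : X | ∃ hl : l ≠ [], IsPath G l ∧ t ∈ K (G.r (l.getLast hl)) ∧
      M.pathMap l t = t}.Subsingleton := by
  rintro t ⟨hl, hp, ht, hft⟩ t' ⟨_, _, ht', hft'⟩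
  have h := (M.key hK l hl hp t ht t' ht').2
  rw [hft, hft'] at h
  by_contra hne
  have hd : 0 < dist t t' := dist_pos.mpr hne
  have hck : M.c ^ l.length < 1 := by
    apply pow_lt_one₀ M.c_pos_s14.le M.c_lt_one
    exact (List.length_pos_iff.mpr hl).ne'
  nlinarith

end MWGraph

/-- Let `(K v)` be the invariant list of a Mauldin–Williams
graph with invariant set `K` having no isolated points.  Then every nonempty
(relatively) open subset `U` of `K` contains, for every `n ≥ 1`, a point `t₀`
which is not a fixed point of any composition `φ_α` of at most `n` edge maps. -/
theorem MWGraph.exists_nonperiodic_point {V E : Type*} [Fintype V] [Fintype E]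
    {G : DirGraph V E} {X : Type*} [MetricSpace X] (M : MWGraph G X)
    (K : V → Set X) (hK : M.IsInvariantList K)
    (hnoiso : ∀ v, ∀ x ∈ K v, ∀ ε > 0, ∃ y ∈ K v, y ≠ x ∧ dist y x < ε)
    (U : Set X) (hUopen : ∃ O : Set X, IsOpen O ∧ U = O ∩ ⋃ v, K v)
    (hUne : U.Nonempty) (n : ℕ) (hn : 1 ≤ n) :
    ∃ t₀ ∈ U, ∀ (l : List E) (hl : l ≠ []), l.length ≤ n → MWGraph.IsPath G l →
      t₀ ∈ K (G.r (l.getLast hl)) → M.pathMap l t₀ ≠ t₀ := by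
  obtain ⟨O, hO, hUeq⟩ := hUopen
  obtain ⟨x, hxU⟩ := hUne
  set B : Set X := ⋃ l ∈ {l : List E | l.length ≤ n},
    {t : X | ∃ hl : l ≠ [], MWGraph.IsPath G l ∧ t ∈ K (G.r (l.getLast hl)) ∧
      M.pathMap l t = t} with hB
  have hBfin : B.Finite :=
    (List.finite_length_le E n).biUnion fun l _ => (M.fix_subsingleton hK l).finite
  have hxO : x ∈ O := (hUeq ▸ hxU).1
  have hxK : x ∈ ⋃ v, K v := (hUeq ▸ hxU).2
  obtain ⟨v, hv⟩ := Set.mem_iUnion.mp hxK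
  have hclosed : IsClosed (B \ {x}) := (hBfin.subset Set.diff_subset).isClosed
  have hopen : IsOpen (O ∩ (B \ {x})ᶜ) := hO.inter hclosed.isOpen_compl
  have hxmem : x ∈ O ∩ (B \ {x})ᶜ := ⟨hxO, fun h => h.2 rfl⟩
  obtain ⟨ε, hε, hball⟩ := Metric.isOpen_iff.mp hopen x hxmem
  obtain ⟨y, hyK, hyne, hyd⟩ := hnoiso v x hv ε hε
  have hy := hball (by simpa [Metric.mem_ball] using hyd)
  refine ⟨y, ?_, ?_⟩
  · rw [hUeq]; exact ⟨hy.1, Set.mem_iUnion.mpr ⟨v, hyK⟩⟩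
  · intro l hl hlen hp hyKr hfix
    exact hy.2 ⟨Set.mem_biUnion hlen ⟨hl, hp, hyKr, hfix⟩, hyne⟩
end

section
/- Let a Mauldin–Williams graph have spaces (T_v)_{v∈V}, with T = ⋃_{v∈V} T_v the disjoint union, and set T_G = {(e,x) : e ∈ E, x ∈ T_{r(e)}}. The linear map Φ̃ : C(T, ℂ) → C(T_G, ℂ) given by Φ̃(a)(e,x) = a(φ_e(x)) (which implements the left action of C(T) on the C*-correspondence C(E ×_G T)) is injective if and only if T_v = ⋃_{e∈E, s(e)=v} φ_e(T_{r(e)}) for every v ∈ V, i.e., if and only if the family (T_v) is itself the invariant list of the graph. -/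
/-- The map `Φ̃ : C(T, ℂ) → C(T_G, ℂ)`, `Φ̃ a (e, x) = a (φ e x)`,
implementing the left action of `C(T)` on the correspondence `C(E ×_G T)`, is
injective if and only if `T v = ⋃_{e ∈ E, s e = v} φ e '' T (r e)` for every
vertex `v`, i.e. iff the family `(T v)` is itself the invariant list. -/
theorem MWGraph.leftAction_injective_iff {V E : Type*} [Fintype V] [Fintype E]
    {G : DirGraph V E} {X : Type*} [MetricSpace X] (M : MWGraph G X) :
    (∀ a : X → ℂ, ContinuousOn a M.KK →
        (∀ e : E, ∀ x ∈ M.T (G.r e), a (M.φ e x) = 0) →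
        ∀ t ∈ M.KK, a t = 0) ↔
      M.SelfInvariant := by
  constructor
  · intro h v
    apply Set.Subset.antisymm
    · intro t ht
      -- use the function x ↦ dist x S where S is the union of all images
      set S : Set X := ⋃ e : E, M.φ e '' M.T (G.r e) with hS
      have hScomp : IsCompact S := isCompact_iUnion fun e =>
        (M.T_compact _).image_of_continuousOn
          ((lipschitzOnWith_iff_dist_le_mul.2 (by
            intro x hx y hy
            have := M.upper e x hx y hy
            calc dist (M.φ e x) (M.φ e y) ≤ M.c * dist x y := this
              _ ≤ (Real.toNNReal M.c : ℝ) * dist x y := by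
                  gcongr
                  exact (Real.le_coe_toNNReal M.c))).continuousOn)
      obtain ⟨e₀, he₀⟩ := G.s_surj v
      have hSne : S.Nonempty := by
        obtain ⟨x, hx⟩ := M.T_nonempty (G.r e₀)
        exact ⟨M.φ e₀ x, Set.mem_iUnion.2 ⟨e₀, ⟨x, hx, rfl⟩⟩⟩
      have hzero : Metric.infDist t S = 0 := by
        have := h (fun x => (Metric.infDist x S : ℂ))
          (Continuous.continuousOn (Complex.continuous_ofReal.comp (Metric.continuous_infDist_pt S)))
          (by
            intro e x hx
            simp only [Complex.ofReal_eq_zero]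
            exact Metric.infDist_zero_of_mem
              (Set.mem_iUnion.2 ⟨e, ⟨x, hx, rfl⟩⟩))
          t (Set.mem_iUnion.2 ⟨v, ht⟩)
        simpa using this
      have htS : t ∈ S :=
        (hScomp.isClosed.mem_iff_infDist_zero hSne).2 hzero
      obtain ⟨g, hg⟩ := Set.mem_iUnion.1 htS
      have hsg : G.s g = v := by
        by_contra hne
        obtain ⟨x, hx, rfl⟩ := hg
        exact (M.T_disjoint _ _ hne).ne_of_mem (M.maps_to g hx) ht rfl
      exact Set.mem_iUnion₂.2 ⟨g, hsg, hg⟩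
    · intro t ht
      obtain ⟨g, hg, y, hy, rfl⟩ := Set.mem_iUnion₂.1 ht
      exact hg ▸ M.maps_to g hy
  · intro hSI a _ ha t ht
    obtain ⟨v, hv⟩ := Set.mem_iUnion.1 ht
    rw [hSI v] at hv
    obtain ⟨g, _, y, hy, rfl⟩ := Set.mem_iUnion₂.1 hv
    exact ha g y hy
end

section
/- For i = 1,2 let two Mauldin–Williams graphs over the same underlying graph G = (V,E,r,s) coincide with their invariant lists, with invariant sets K¹, K², algebras A_i = C(Kⁱ, ℂ) and bimodules X_i, and let V : X₂ → X₁ be a correspondence isomorphism over a homeomorphism f : K¹ → K². For g ∈ E let δ_g ∈ X₂ be the function δ_g(h,y) = 1 if h = g and 0 otherwise, and define w_{eg} : K¹ → ℂ by w_{eg}(x) = V(δ_g)(e,x) if x ∈ K¹_{r(e)} and w_{eg}(x) = 0 otherwise. Then for every x ∈ K¹ and all e, g ∈ E with f(x) ∈ K²_{r(e)} and f(x) ∈ K²_{r(g)}: Σ_{h∈E, x∈K¹_{r(h)}} conj(w_{hg}(x))·w_{he}(x) equals 1 if e = g and equals 0 if e ≠ g. Consequently, for every x ∈ K¹ there is an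 injective map σ_x from {e ∈ E : f(x) ∈ K²_{r(e)}} into {h ∈ E : x ∈ K¹_{r(h)}} such that w_{σ_x(e), e}(x) ≠ 0 for all e in its domain. -/
open scoped Classical

namespace MWGraph

variable {V E : Type*} [Fintype E] {G : DirGraph V E}

/-- The natural basis element `δ_g` of the bimodule `X₂`:
`δ_g (h, y) = 1` if `h = g` (and `y ∈ K (r h)`), and `0` otherwise. -/
noncomputable def deltaElt {X₂ : Type*} [MetricSpace X₂] (M₂ : MWGraph G X₂) (g : E) :
    E → X₂ → ℂ :=
  fun h y => if h = g ∧ y ∈ M₂.T (G.r h) then 1 else 0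

/-- The matrix of the correspondence isomorphism `W` with respect to the natural
bases: `w e g x = W (δ_g) (e, x)` for `x ∈ K¹ (r e)`, and `0` otherwise. -/
noncomputable def wMat {X₁ X₂ : Type*} [MetricSpace X₁] [MetricSpace X₂]
    (M₁ : MWGraph G X₁) (M₂ : MWGraph G X₂)
    (W : (E → X₂ → ℂ) → (E → X₁ → ℂ)) (e g : E) (x : X₁) : ℂ :=
  if x ∈ M₁.T (G.r e) then W (deltaElt M₂ g) e x else 0

end MWGraph

section

open Finset

variable {K ι κ : Type*} [Field K] [Fintype ι]

theorem LinearIndependent.card_le_card_biUnion_support {v : κ → ι → K}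
    (hv : LinearIndependent K v) (s : Finset κ) :
    #s ≤ #(s.biUnion fun k => univ.filter fun i => v k i ≠ 0) := by
  set u := s.biUnion fun k => univ.filter fun i => v k i ≠ 0
  have hvanish : ∀ k ∈ s, ∀ i ∉ u, v k i = 0 := fun k hk i hi => by
    by_contra h
    exact hi (mem_biUnion.2 ⟨k, hk, by simpa using h⟩)
  have hres : LinearIndependent K fun k : s => fun i : u => v k i := by
    rw [Fintype.linearIndependent_iff]
    intro c hc
    have hsum : ∑ k : s, c k • v k = 0 := by
      funext i
      by_cases hi : i ∈ u
      · simpa using congr_fun hc ⟨i, hi⟩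
      · simp [hvanish _ (Subtype.prop _) i hi]
    exact Fintype.linearIndependent_iff.1 (hv.comp _ Subtype.val_injective) c hsum
  simpa using hres.fintype_card_le_finrank

theorem LinearIndependent.exists_injective_apply_ne_zero {v : κ → ι → K}
    (hv : LinearIndependent K v) :
    ∃ σ : κ → ι, Function.Injective σ ∧ ∀ k, v k (σ k) ≠ 0 := by
  obtain ⟨σ, hσ, hmem⟩ := (all_card_le_biUnion_card_iff_exists_injective _).1
    hv.card_le_card_biUnion_support
  exact ⟨σ, hσ, fun k => by simpa using hmem k⟩

end

theorem Orthonormal.exists_injective_apply_ne_zero {𝕜 ι κ : Type*} [RCLike 𝕜] [Fintype ι]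
    {v : κ → EuclideanSpace 𝕜 ι} (hv : Orthonormal 𝕜 v) :
    ∃ σ : κ → ι, Function.Injective σ ∧ ∀ k, v k (σ k) ≠ 0 :=
  (hv.linearIndependent.map' _ (WithLp.linearEquiv 2 𝕜 (ι → 𝕜)).ker).exists_injective_apply_ne_zero

namespace MWGraph

variable {V E : Type*} {G : DirGraph V E}

theorem isElt_deltaElt {X : Type*} [MetricSpace X] (M : MWGraph G X) (g : E) :
    IsElt M (deltaElt M g) := by
  refine ⟨fun h => ?_, fun h y hy => by simp [deltaElt, hy]⟩
  refine (continuousOn_const (c := if h = g then (1 : ℂ) else 0)).congr fun y hy => ?_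
  simp [deltaElt, hy]

theorem innerProd_deltaElt [Fintype E] {X : Type*} [MetricSpace X] (M : MWGraph G X) {y : X}
    {g : E} (hy : y ∈ M.T (G.r g)) (e : E) :
    innerProd (deltaElt M g) (deltaElt M e) y = if e = g then 1 else 0 := by
  rw [innerProd, Finset.sum_eq_single g (fun h _ hh => by simp [deltaElt, hh]) (by simp)]
  by_cases heg : e = g
  · simp [deltaElt, hy, heg]
  · simp [deltaElt, heg, Ne.symm heg]

variable {X₁ X₂ : Type*} [MetricSpace X₁] [MetricSpace X₂]
  {M₁ : MWGraph G X₁} {M₂ : MWGraph G X₂} {W : (E → X₂ → ℂ) → (E → X₁ → ℂ)}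

theorem mem_of_wMat_ne_zero {h e : E} {x : X₁} (hw : wMat M₁ M₂ W h e x ≠ 0) :
    x ∈ M₁.T (G.r h) := by
  by_contra hx
  exact hw (if_neg hx)

theorem wMat_eq_of_isElt {g : E} (hg : IsElt M₁ (W (deltaElt M₂ g))) (e : E) (x : X₁) :
    wMat M₁ M₂ W e g x = W (deltaElt M₂ g) e x := by
  by_cases hx : x ∈ M₁.T (G.r e)
  · exact if_pos hx
  · rw [wMat, if_neg hx, hg.2 e x hx]

theorem sum_conj_wMat_mul_wMat [Fintype E] {f : X₁ → X₂} (hW : CorrIso M₁ M₂ f W) {x : X₁}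
    (hx : x ∈ M₁.KK) {e g : E} (hg : f x ∈ M₂.T (G.r g)) :
    ∑ h, (starRingEnd ℂ) (wMat M₁ M₂ W h g x) * wMat M₁ M₂ W h e x = if e = g then 1 else 0 := by
  have hW' := fun g => hW.maps _ (isElt_deltaElt M₂ g)
  simp_rw [wMat_eq_of_isElt (hW' g), wMat_eq_of_isElt (hW' e)]
  rw [← innerProd, hW.inner_eq _ _ (isElt_deltaElt M₂ g) (isElt_deltaElt M₂ e) x hx,
    innerProd_deltaElt M₂ hg]

theorem orthonormal_wMat_col [Fintype E] {f : X₁ → X₂} (hW : CorrIso M₁ M₂ f W) {x : X₁}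
    (hx : x ∈ M₁.KK) :
    Orthonormal ℂ fun e : {e : E // f x ∈ M₂.T (G.r e)} =>
      (WithLp.toLp 2 fun h => wMat M₁ M₂ W h e x : EuclideanSpace ℂ E) := by
  rw [orthonormal_iff_ite]
  rintro ⟨g, hg⟩ ⟨e, -⟩
  simp only [PiLp.inner_apply, RCLike.inner_apply', sum_conj_wMat_mul_wMat hW hx hg,
    Subtype.mk.injEq, eq_comm]

end MWGraph

theorem MWGraph.wMat_orthonormal_general {V E : Type*} [Fintype E]
    {X₁ X₂ : Type*} [MetricSpace X₁] [MetricSpace X₂] {G : DirGraph V E}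
    (M₁ : MWGraph G X₁) (M₂ : MWGraph G X₂)
    (f : X₁ → X₂)
    (W : (E → X₂ → ℂ) → (E → X₁ → ℂ)) (hW : MWGraph.CorrIso M₁ M₂ f W) :
    ∀ x ∈ M₁.KK,
      (∀ e g : E, f x ∈ M₂.T (G.r e) → f x ∈ M₂.T (G.r g) →
        (∑ h ∈ Finset.univ.filter fun h : E => x ∈ M₁.T (G.r h),
            (starRingEnd ℂ) (MWGraph.wMat M₁ M₂ W h g x) * MWGraph.wMat M₁ M₂ W h e x) =
          if e = g then 1 else 0) ∧
      ∃ σ : E → E,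
        Set.InjOn σ {e : E | f x ∈ M₂.T (G.r e)} ∧
        Set.MapsTo σ {e : E | f x ∈ M₂.T (G.r e)} {h : E | x ∈ M₁.T (G.r h)} ∧
        ∀ e : E, f x ∈ M₂.T (G.r e) → MWGraph.wMat M₁ M₂ W (σ e) e x ≠ 0 := by
  intro x hx
  refine ⟨fun e g _ hg => ?_, ?_⟩
  · rw [Finset.sum_filter_of_ne fun h _ hne =>
      MWGraph.mem_of_wMat_ne_zero (right_ne_zero_of_mul hne)]
    exact MWGraph.sum_conj_wMat_mul_wMat hW hx hg
  obtain ⟨σ, hσ, hσne⟩ := (MWGraph.orthonormal_wMat_col hW hx).exists_injective_apply_ne_zero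
  let σ' : E → E := fun e => if he : f x ∈ M₂.T (G.r e) then σ ⟨e, he⟩ else e
  have hσ' : ∀ e (he : f x ∈ M₂.T (G.r e)), σ' e = σ ⟨e, he⟩ := fun e he => dif_pos he
  refine ⟨σ', fun e he e' he' heq => ?_, fun e he => ?_, fun e he => ?_⟩
  · rw [hσ' e he, hσ' e' he'] at heq
    exact congrArg Subtype.val (hσ heq)
  · exact MWGraph.mem_of_wMat_ne_zero (hσ' e he ▸ hσne ⟨e, he⟩)
  · exact hσ' e he ▸ hσne ⟨e, he⟩

/-- Let `W : X₂ → X₁` be a correspondence isomorphism over a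
homeomorphism `f : K¹ → K²`, with matrix `w e g = W (δ_g) (e, ·)` in the natural
bases.  Then for every `x ∈ K¹` and all `e, g ∈ E` with `f x ∈ K² (r e)` and
`f x ∈ K² (r g)`, `∑_{h ∈ E, x ∈ K¹ (r h)} conj (w h g x) * w h e x` is `1` if
`e = g` and `0` otherwise; consequently there is an injective map `σ_x` from
`{e | f x ∈ K² (r e)}` into `{h | x ∈ K¹ (r h)}` with `w (σ_x e) e x ≠ 0` on its
domain. -/
theorem MWGraph.wMat_orthonormal {V E : Type*} [Fintype V] [Fintype E]
    {X₁ X₂ : Type*} [MetricSpace X₁] [MetricSpace X₂] {G : DirGraph V E}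
    (M₁ : MWGraph G X₁) (M₂ : MWGraph G X₂)
    (hM₁ : M₁.SelfInvariant) (hM₂ : M₂.SelfInvariant)
    (f : X₁ → X₂) (g' : X₂ → X₁)
    (hf : Set.MapsTo f M₁.KK M₂.KK) (hg : Set.MapsTo g' M₂.KK M₁.KK)
    (hfc : ContinuousOn f M₁.KK) (hgc : ContinuousOn g' M₂.KK)
    (hgf : ∀ x ∈ M₁.KK, g' (f x) = x) (hfg : ∀ y ∈ M₂.KK, f (g' y) = y)
    (W : (E → X₂ → ℂ) → (E → X₁ → ℂ)) (hW : MWGraph.CorrIso M₁ M₂ f W) :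
    ∀ x ∈ M₁.KK,
      (∀ e g : E, f x ∈ M₂.T (G.r e) → f x ∈ M₂.T (G.r g) →
        (∑ h ∈ Finset.univ.filter fun h : E => x ∈ M₁.T (G.r h),
            (starRingEnd ℂ) (MWGraph.wMat M₁ M₂ W h g x) * MWGraph.wMat M₁ M₂ W h e x) =
          if e = g then 1 else 0) ∧
      ∃ σ : E → E,
        Set.InjOn σ {e : E | f x ∈ M₂.T (G.r e)} ∧
        Set.MapsTo σ {e : E | f x ∈ M₂.T (G.r e)} {h : E | x ∈ M₁.T (G.r h)} ∧
        ∀ e : E, f x ∈ M₂.T (G.r e) → MWGraph.wMat M₁ M₂ W (σ e) e x ≠ 0 :=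
  MWGraph.wMat_orthonormal_general M₁ M₂ f W hW
end
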